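/- arXiv:2004.12590 — 11 statements merged into one kernel-verified Lean document; each statement's English description precedes it below -/
import Mathlib

section
/- Let T be a nonempty string with Lyndon factorization T = T_1 T_2 ⋯ T_t. Then the first entry of the bijective Burrows–Wheeler transform of T equals the last character of T, i.e., BBWT[1] = T[|T|]. -/
/-- A nonempty string `w` is a Lyndon word if it is lexicographically strictly smaller
than each of its nontrivial conjugates (rotations). -/
def IsLyndon {α : Type*} [LinearOrder α] (w : List α) : Prop :=
  w ≠ [] ∧ ∀ i, 0 < i → i < w.length → List.Lex (· < ·) w (w.rotate i)

/-- `fs` is the Lyndon factorization of `T`: the factors concatenate to `T`,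
each factor is a Lyndon word, and the factors are lexicographically non-increasing. -/
def IsLyndonFactorization {α : Type*} [LinearOrder α] (fs : List (List α)) (T : List α) : Prop :=
  fs.flatten = T ∧ (∀ f ∈ fs, IsLyndon f) ∧
    fs.Chain' (fun a b => ¬ List.Lex (· < ·) a b)

/-- The infinite periodic word `S^ω = SSS⋯` (the default value is irrelevant for
nonempty `S`, since `i % S.length < S.length`). -/
def omegaWord {α : Type*} [Inhabited α] (S : List α) : ℕ → α :=
  fun i => S.getD (i % S.length) default

/-- `S ≺_ω T`: the infinite word `S^ω` is lexicographically smaller than `T^ω`,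
i.e. they are compared at the first position where they differ. -/
def OmegaLt {α : Type*} [LinearOrder α] [Inhabited α] (S T : List α) : Prop :=
  ∃ k, (∀ j < k, omegaWord S j = omegaWord T j) ∧ omegaWord S k < omegaWord T k

/-- `S ≼_ω T`: `S ≺_ω T` or `S^ω = T^ω`. -/
def OmegaLe {α : Type*} [LinearOrder α] [Inhabited α] (S T : List α) : Prop :=
  OmegaLt S T ∨ omegaWord S = omegaWord T

/-- The list of all conjugates `conj_0(T), …, conj_{n-1}(T)` of `T`. -/
def conjugates {α : Type*} (T : List α) : List (List α) :=
  (List.range T.length).map (fun i => T.rotate i)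

section AuxLemmas
set_option linter.unusedSectionVars false
variable {α : Type*} [LinearOrder α] [Inhabited α]

lemma ow_eq_getD (S : List α) {k : ℕ} (h : k < S.length) :
    omegaWord S k = S.getD k default := by
  simp [omegaWord, Nat.mod_eq_of_lt h]

lemma ow_rotate (S : List α) (p i : ℕ) :
    omegaWord (S.rotate p) i = omegaWord S (i + p) := by
  rcases eq_or_ne S [] with rfl | hS
  · simp [omegaWord]
  have hn : 0 < S.length := List.length_pos_iff.2 hS
  have hlen : (S.rotate p).length = S.length := S.length_rotate p
  have h1 : i % S.length < (S.rotate p).length := by rw [hlen]; exact Nat.mod_lt _ hn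
  have h2 : (i + p) % S.length < S.length := Nat.mod_lt _ hn
  rw [omegaWord, omegaWord, hlen, List.getD_eq_getElem _ _ h1, List.getD_eq_getElem _ _ h2]
  have := List.get_rotate S p ⟨i % S.length, h1⟩
  simp only [List.get_eq_getElem] at this
  rw [this]
  congr 1
  rw [Nat.mod_add_mod]

lemma ow_period (S : List α) (i : ℕ) :
    omegaWord S (i + S.length) = omegaWord S i := by
  simp [omegaWord, Nat.add_mod_right]

lemma lex_elim {v u : List α} (h : List.Lex (· < ·) v u) :
    (∃ w, w ≠ [] ∧ u = v ++ w) ∨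
      ∃ k, k < v.length ∧ k < u.length ∧
        (∀ j < k, v.getD j default = u.getD j default) ∧
        v.getD k default < u.getD k default := by
  induction h with
  | nil => exact Or.inl ⟨_, by simp, rfl⟩
  | @cons a l₁ l₂ h ih =>
    rcases ih with ⟨w, hw, rfl⟩ | ⟨k, hk1, hk2, hag, hlt⟩
    · exact Or.inl ⟨w, hw, rfl⟩
    · refine Or.inr ⟨k + 1, by simpa using hk1, by simpa using hk2, ?_, by simpa using hlt⟩
      intro j hj
      cases j with
      | zero => simp
      | succ j => simpa using hag j (by omega)
  | @rel a b l₁ l₂ hab =>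
    exact Or.inr ⟨0, by simp, by simp, by omega, by simpa using hab⟩

lemma lex_total (u v : List α) :
    List.Lex (· < ·) u v ∨ u = v ∨ List.Lex (· < ·) v u := by
  induction u generalizing v with
  | nil => cases v with
    | nil => exact Or.inr (Or.inl rfl)
    | cons b t => exact Or.inl List.Lex.nil
  | cons a t ih =>
    cases v with
    | nil => exact Or.inr (Or.inr List.Lex.nil)
    | cons b s =>
      rcases lt_trichotomy a b with h | rfl | h
      · exact Or.inl (List.Lex.rel h)
      · rcases ih s with h | rfl | h
        · exact Or.inl (List.Lex.cons h)
        · exact Or.inr (Or.inl rfl)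
        · exact Or.inr (Or.inr (List.Lex.cons h))
      · exact Or.inr (Or.inr (List.Lex.rel h))

lemma omega_total (u v : List α) :
    OmegaLt u v ∨ omegaWord u = omegaWord v ∨ OmegaLt v u := by
  by_cases h : omegaWord u = omegaWord v
  · exact Or.inr (Or.inl h)
  have hex : ∃ k, omegaWord u k ≠ omegaWord v k := by
    by_contra hc
    push_neg at hc
    exact h (funext hc)
  classical
  let k := Nat.find hex
  have hk : omegaWord u k ≠ omegaWord v k := Nat.find_spec hex
  have hag : ∀ j < k, omegaWord u j = omegaWord v j := fun j hj => by
    by_contra hc; exact absurd hj (not_lt.2 (Nat.find_le hc))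
  rcases lt_or_gt_of_ne hk with h' | h'
  · exact Or.inl ⟨k, hag, h'⟩
  · exact Or.inr (Or.inr ⟨k, fun j hj => (hag j hj).symm, h'⟩)

lemma omegaLt_asymm {u v : List α} (h1 : OmegaLt u v) (h2 : OmegaLt v u) : False := by
  obtain ⟨k1, hag1, hlt1⟩ := h1
  obtain ⟨k2, hag2, hlt2⟩ := h2
  rcases lt_trichotomy k1 k2 with h | rfl | h
  · exact absurd (hag2 k1 h).symm (ne_of_lt hlt1)
  · exact absurd hlt2 (not_lt.2 (le_of_lt hlt1))
  · exact absurd (hag1 k2 h) (ne_of_gt hlt2)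

lemma omegaLt_trans {u v w : List α} (h1 : OmegaLt u v) (h2 : OmegaLt v w) : OmegaLt u w := by
  obtain ⟨k1, hag1, hlt1⟩ := h1
  obtain ⟨k2, hag2, hlt2⟩ := h2
  refine ⟨min k1 k2, fun j hj => (hag1 j (lt_of_lt_of_le hj (min_le_left _ _))).trans
    (hag2 j (lt_of_lt_of_le hj (min_le_right _ _))), ?_⟩
  rcases lt_trichotomy k1 k2 with h | rfl | h
  · rw [min_eq_left h.le]; exact lt_of_lt_of_le hlt1 (le_of_eq (hag2 k1 h))
  · rw [min_self]; exact lt_trans hlt1 hlt2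
  · rw [min_eq_right h.le]; exact lt_of_le_of_lt (le_of_eq (hag1 k2 h)) hlt2

lemma omegaLe_refl (u : List α) : OmegaLe u u := Or.inr rfl

lemma omegaLe_trans {u v w : List α} (h1 : OmegaLe u v) (h2 : OmegaLe v w) : OmegaLe u w := by
  rcases h1 with h1 | h1 <;> rcases h2 with h2 | h2
  · exact Or.inl (omegaLt_trans h1 h2)
  · exact Or.inl (by unfold OmegaLt at h1 ⊢; rw [← h2]; exact h1)
  · exact Or.inl (by unfold OmegaLt at h2 ⊢; rw [h1]; exact h2)
  · exact Or.inr (h1.trans h2)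

lemma lyndon_omegaLt_rotate {u : List α} (hu : IsLyndon u) {p : ℕ}
    (hp0 : 0 < p) (hpl : p < u.length) : OmegaLt u (u.rotate p) := by
  have hlex := hu.2 p hp0 hpl
  rcases lex_elim hlex with ⟨w, hw, heq⟩ | ⟨k, hk1, hk2, hag, hlt⟩
  · have hl := congrArg List.length heq
    rw [List.length_rotate, List.length_append] at hl
    have hw0 : w.length = 0 := by omega
    exact absurd (List.length_eq_zero_iff.1 hw0) hw
  · rw [List.length_rotate] at hk2
    refine ⟨k, fun j hj => ?_, ?_⟩
    · rw [ow_eq_getD u (lt_trans hj hk1),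
        ow_eq_getD _ (by rw [List.length_rotate]; exact lt_trans hj hk2)]
      exact hag j hj
    · rw [ow_eq_getD u hk1, ow_eq_getD _ (by rw [List.length_rotate]; exact hk2)]
      exact hlt

lemma lyndon_omegaLe_rotate {u : List α} (hu : IsLyndon u) (i : ℕ) :
    OmegaLe u (u.rotate i) := by
  have hn : 0 < u.length := List.length_pos_iff.2 hu.1
  rcases Nat.eq_zero_or_pos (i % u.length) with h | h
  · right
    rw [← List.rotate_mod, h, List.rotate_zero]
  · left
    rw [← List.rotate_mod]
    exact lyndon_omegaLt_rotate hu h (Nat.mod_lt _ hn)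

lemma lyndon_prefix_omegaLe {u v w : List α} (hu : IsLyndon u) (hv : v ≠ [])
    (hw : w ≠ []) (heq : u = v ++ w) : OmegaLe v u := by
  rcases omega_total v u with h | h | h
  · exact Or.inl h
  · exact Or.inr h
  exfalso
  set p := v.length with hpdef
  have hp0 : 0 < p := List.length_pos_iff.2 hv
  have hpl : p < u.length := by
    rw [heq, List.length_append]
    have : 0 < w.length := List.length_pos_iff.2 hw
    omega
  -- agreement of u^ω and v^ω on [0, p)
  have hA : ∀ j < p, omegaWord u j = omegaWord v j := by
    intro j hj
    rw [ow_eq_getD u (lt_trans hj hpl), ow_eq_getD v hj, heq]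
    exact List.getD_append _ _ _ _ hj
  -- v^ω has period p
  have hB : ∀ i, omegaWord v (i + p) = omegaWord v i := fun i => ow_period v i
  obtain ⟨k, hag, hk⟩ := h
  rcases lt_or_ge k p with hkp | hkp
  · exact absurd (hA k hkp) (ne_of_lt hk)
  · set D := k - p with hDdef
    have hDk : D + p = k := by omega
    have hDlt : D < k := by omega
    -- shift of u^ω by p, vs v^ω
    have hshift_ag : ∀ j < D, omegaWord u (j + p) = omegaWord v j := by
      intro j hj
      rw [hag (j + p) (by omega), hB j]
    have hshift_lt : omegaWord u (D + p) < omegaWord v D := by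
      rw [hDk]
      calc omegaWord u k < omegaWord v k := hk
        _ = omegaWord v D := by rw [← hDk, hB D]
    obtain ⟨m, hmag, hmlt⟩ := lyndon_omegaLt_rotate hu hp0 hpl
    simp only [ow_rotate] at hmag hmlt
    rcases lt_trichotomy m D with hmD | hmD | hmD
    · have h1 : omegaWord u m < omegaWord v m :=
        lt_of_lt_of_le hmlt (le_of_eq (hshift_ag m hmD))
      exact absurd (hag m (by omega)) (ne_of_lt h1)
    · subst hmD
      have h1 : omegaWord u D < omegaWord v D := lt_trans hmlt hshift_lt
      exact absurd (hag D hDlt) (ne_of_lt h1)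
    · have h1 : omegaWord u D = omegaWord u (D + p) := hmag D hmD
      have h2 : omegaWord u D < omegaWord v D := h1 ▸ hshift_lt
      exact absurd (hag D hDlt) (ne_of_lt h2)

lemma lyndon_lex_omegaLe {u v : List α} (hu : IsLyndon u) (hv : v ≠ [])
    (hlex : ¬ List.Lex (· < ·) u v) : OmegaLe v u := by
  rcases lex_total v u with h | rfl | h
  · rcases lex_elim h with ⟨w, hw, heq⟩ | ⟨k, hk1, hk2, hag, hlt⟩
    · exact lyndon_prefix_omegaLe hu hv hw heq
    · exact Or.inl ⟨k, fun j hj => by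
        rw [ow_eq_getD v (lt_trans hj hk1), ow_eq_getD u (lt_trans hj hk2)]
        exact hag j hj,
        by rw [ow_eq_getD v hk1, ow_eq_getD u hk2]; exact hlt⟩
  · exact omegaLe_refl v
  · exact absurd h hlex

lemma getLast_of_omega_eq {S R : List α} (h : omegaWord S = omegaWord R)
    (hS : S ≠ []) (hR : R ≠ []) : S.getLast hS = R.getLast hR := by
  have hs : 0 < S.length := List.length_pos_iff.2 hS
  have hr : 0 < R.length := List.length_pos_iff.2 hR
  set N := S.length * R.length - 1 with hN
  have hNs : N % S.length = S.length - 1 := by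
    have h1 : N = (S.length - 1) + S.length * (R.length - 1) := by
      cases' Nat.exists_eq_add_of_le hs with a ha
      cases' Nat.exists_eq_add_of_le hr with b hb
      simp [hN, ha, hb]; ring_nf; omega
    rw [h1, Nat.add_mul_mod_self_left, Nat.mod_eq_of_lt (by omega)]
  have hNr : N % R.length = R.length - 1 := by
    have h1 : N = (R.length - 1) + R.length * (S.length - 1) := by
      cases' Nat.exists_eq_add_of_le hs with a ha
      cases' Nat.exists_eq_add_of_le hr with b hb
      simp [hN, ha, hb]; ring_nf; omega
    rw [h1, Nat.add_mul_mod_self_left, Nat.mod_eq_of_lt (by omega)]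
  have key := congrFun h N
  rw [omegaWord, omegaWord, hNs, hNr,
    List.getD_eq_getElem _ _ (by omega), List.getD_eq_getElem _ _ (by omega)] at key
  rw [List.getLast_eq_getElem, List.getLast_eq_getElem]
  exact key

lemma chain_last_omegaLe (fs : List (List α)) (hne : fs ≠ [])
    (hall : ∀ f ∈ fs, IsLyndon f)
    (hch : fs.Chain' (fun a b => ¬ List.Lex (· < ·) a b)) :
    ∀ f ∈ fs, OmegaLe (fs.getLast hne) f := by
  induction fs with
  | nil => exact absurd rfl hne
  | cons a t ih =>
    cases t with
    | nil =>
      intro f hf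
      simp at hf
      subst hf
      exact omegaLe_refl _
    | cons b r =>
      have hne' : b :: r ≠ [] := by simp
      have hch' : (b :: r).Chain' (fun a b => ¬ List.Lex (· < ·) a b) := hch.tail
      have hall' : ∀ f ∈ b :: r, IsLyndon f := fun f hf => hall f (List.mem_cons_of_mem _ hf)
      have IH := ih hne' hall' hch'
      have hlast : (a :: b :: r).getLast (by simp) = (b :: r).getLast hne' :=
        List.getLast_cons hne'
      intro f hf
      rcases List.mem_cons.1 hf with rfl | hf'
      · -- OmegaLe (last) b  then  OmegaLe b f
        have h1 : OmegaLe ((b :: r).getLast hne') b := IH b (List.mem_cons_self)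
        have hnl : ¬ List.Lex (· < ·) f b := (List.isChain_cons_cons.1 hch).1
        have h2 : OmegaLe b f := lyndon_lex_omegaLe (hall f hf) (hall' b (List.mem_cons_self)).1 hnl
        rw [hlast]
        exact omegaLe_trans h1 h2
      · rw [hlast]
        exact IH f hf'

lemma getLast_cast {l l' : List α} (e : l = l') (h : l ≠ []) (h' : l' ≠ []) :
    l.getLast h = l'.getLast h' := by subst e; rfl

lemma flatten_getLast (fs : List (List α)) (hne : fs ≠ [])
    (hg : fs.getLast hne ≠ []) :
    fs.flatten ≠ [] ∧ ∀ h : fs.flatten ≠ [],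
      fs.flatten.getLast h = (fs.getLast hne).getLast hg := by
  induction fs with
  | nil => exact absurd rfl hne
  | cons a t ih =>
    cases t with
    | nil =>
      constructor
      · simpa using hg
      · intro h
        simp only [List.flatten_cons, List.flatten_nil, List.append_nil] at h ⊢
        rfl
    | cons b r =>
      have hne' : b :: r ≠ [] := by simp
      have hlast : (a :: b :: r).getLast (by simp) = (b :: r).getLast hne' :=
        List.getLast_cons hne'
      have hg' : (b :: r).getLast hne' ≠ [] := by rw [← hlast]; exact hg
      obtain ⟨h1, h2⟩ := ih hne' hg'
      have hfl : (a :: b :: r).flatten = a ++ (b :: r).flatten := rfl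
      constructor
      · rw [hfl]
        intro hc
        exact h1 (List.append_eq_nil_iff.1 hc).2
      · intro h
        have h' : a ++ (b :: r).flatten ≠ [] := by rw [← hfl]; exact h
        show (a ++ (b :: r).flatten).getLast h' = _
        rw [List.getLast_append h']
        rw [dif_neg (by simpa [List.isEmpty_iff] using h1)]
        rw [h2 h1]
        exact (getLast_cast hlast hg hg).symm

lemma getLastI_eq {m : List α} (hm : m ≠ []) : m.getLastI = m.getLast hm := by
  rw [List.getLastI_eq_getLast?, List.getLast?_eq_getLast hm, Option.getD_some]

end AuxLemmas

/-- For a nonempty string `T` with Lyndon factorization `fs`,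
the first entry of the bijective BWT of `T` (the last character of the first string in
the ≼_ω-sorted list of all conjugates of all Lyndon factors) equals the last character of `T`. -/
theorem bbwt_first_entry_eq_last_char {α : Type*} [LinearOrder α] [Inhabited α]
    (T : List α) (hT : T ≠ [])
    (fs : List (List α)) (hfs : IsLyndonFactorization fs T)
    (L : List (List α))
    (hperm : L.Perm (fs.flatMap conjugates))
    (hsorted : L.Pairwise OmegaLe) :
    L.headI.getLastI = T.getLast hT := by
  obtain ⟨hfl, hall, hch⟩ := hfs
  have hfsne : fs ≠ [] := by
    rintro rfl
    exact hT (hfl.symm)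
  set g := fs.getLast hfsne with hgdef
  have hgly : IsLyndon g := hall g (List.getLast_mem hfsne)
  have hgne : g ≠ [] := hgly.1
  -- g is in the flatMap
  have hgmem : g ∈ fs.flatMap conjugates := by
    rw [List.mem_flatMap]
    refine ⟨g, List.getLast_mem hfsne, ?_⟩
    unfold conjugates
    rw [List.mem_map]
    exact ⟨0, List.mem_range.2 (List.length_pos_iff.2 hgne), List.rotate_zero g⟩
  have hLne : L ≠ [] := by
    rintro rfl
    exact absurd (hperm.mem_iff.2 hgmem) List.not_mem_nil
  obtain ⟨m, rest, rfl⟩ := List.exists_cons_of_ne_nil hLne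
  have hpw := List.pairwise_cons.1 hsorted
  -- m ≼ g
  have hmg : OmegaLe m g := by
    rcases List.mem_cons.1 (hperm.mem_iff.2 hgmem) with rfl | h
    · exact omegaLe_refl _
    · exact hpw.1 g h
  -- m is a conjugate of some factor f
  have hmmem : m ∈ fs.flatMap conjugates := hperm.mem_iff.1 (List.mem_cons_self)
  rw [List.mem_flatMap] at hmmem
  obtain ⟨f, hffs, hmconj⟩ := hmmem
  unfold conjugates at hmconj
  rw [List.mem_map] at hmconj
  obtain ⟨i, _, rfl⟩ := hmconj
  have hfly : IsLyndon f := hall f hffs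
  -- g ≼ m
  have hgm : OmegaLe g (f.rotate i) :=
    omegaLe_trans (chain_last_omegaLe fs hfsne hall hch f hffs)
      (lyndon_omegaLe_rotate hfly i)
  -- hence equal omega words
  have hω : omegaWord (f.rotate i) = omegaWord g := by
    rcases hmg with h1 | h1
    · rcases hgm with h2 | h2
      · exact absurd h1 (fun _ => omegaLt_asymm h1 h2)
      · exact h2.symm
    · exact h1
  have hmne : f.rotate i ≠ [] := fun hc => hfly.1 (List.rotate_eq_nil_iff.1 hc)
  -- conclude
  obtain ⟨hflne, hlastT⟩ := flatten_getLast fs hfsne hgne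
  have hTne' : fs.flatten ≠ [] := hflne
  calc (f.rotate i :: rest).headI.getLastI
      = (f.rotate i).getLast hmne := getLastI_eq hmne
    _ = g.getLast hgne := getLast_of_omega_eq hω hmne hgne
    _ = T.getLast hT := by
        rw [← hlastT hTne']
        exact (getLast_cast hfl hTne' hT)
end

section
/- Every nonempty primitive string T of length n has exactly one Lyndon conjugate: there is exactly one index i ∈ [0..n−1] such that conj_i(T) is a Lyndon word. -/
/-- `T` is primitive: `T = S^k` with `k ≥ 1` implies `k = 1`. -/
def Primitive {α : Type*} (T : List α) : Prop :=
  ∀ (S : List α) (k : ℕ), 1 ≤ k → T = (List.replicate k S).flatten → k = 1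

/-- Two words that commute under concatenation are powers of a common word. -/
theorem comm_append_pow' {β : Type*} : ∀ (N : ℕ) (u v : List β), u.length + v.length ≤ N →
    u ++ v = v ++ u →
    ∃ (w : List β) (a b : ℕ), u = (List.replicate a w).flatten ∧
      v = (List.replicate b w).flatten := by
  intro N
  induction N with
  | zero =>
    intro u v hlen _
    have hu : u = [] := List.length_eq_zero_iff.mp (by omega)
    have hv : v = [] := List.length_eq_zero_iff.mp (by omega)
    exact ⟨[], 0, 0, by simp [hu], by simp [hv]⟩
  | succ N ih =>
    intro u v hlen h
    rcases eq_or_ne u [] with hu | hu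
    · exact ⟨v, 0, 1, by simp [hu], by simp⟩
    rcases eq_or_ne v [] with hv | hv
    · exact ⟨u, 1, 0, by simp, by simp [hv]⟩
    rcases le_total u.length v.length with hle | hle
    · -- u is a prefix of v
      have hpre : u = v.take u.length := by
        have h1 : (u ++ v).take u.length = u := List.take_left
        rw [h] at h1
        conv_lhs => rw [← h1, List.take_append_of_le_length hle]
      set v' := v.drop u.length with hv'
      have hvdec : v = u ++ v' := by
        conv_lhs => rw [← List.take_append_drop u.length v, ← hpre]
      have h2 : u ++ v' = v' ++ u := by
        have : u ++ (u ++ v') = (u ++ v') ++ u := by rw [← hvdec, h, hvdec]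
        rw [List.append_assoc] at this
        exact List.append_cancel_left this
      have hul : 0 < u.length := List.length_pos_iff.mpr hu
      have hlen' : u.length + v'.length ≤ N := by
        have : v'.length = v.length - u.length := by simp [hv']
        omega
      obtain ⟨w, a, b, hwu, hwv'⟩ := ih u v' hlen' h2
      exact ⟨w, a, a + b, hwu, by
        rw [hvdec, hwu, hwv', ← List.flatten_append, ← List.replicate_add]⟩
    · -- v is a prefix of u
      have hpre : v = u.take v.length := by
        have h1 : (v ++ u).take v.length = v := List.take_left
        rw [← h] at h1
        conv_lhs => rw [← h1, List.take_append_of_le_length hle]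
      set u' := u.drop v.length with hu'
      have hudec : u = v ++ u' := by
        conv_lhs => rw [← List.take_append_drop v.length u, ← hpre]
      have h2 : v ++ u' = u' ++ v := by
        have : v ++ (v ++ u') = (v ++ u') ++ v := by rw [← hudec, ← h, hudec]
        rw [List.append_assoc] at this
        exact List.append_cancel_left this
      have hvl : 0 < v.length := List.length_pos_iff.mpr hv
      have hlen' : v.length + u'.length ≤ N := by
        have : u'.length = u.length - v.length := by simp [hu']
        omega
      obtain ⟨w, a, b, hwv, hwu'⟩ := ih v u' hlen' h2
      exact ⟨w, a + b, a, by
        rw [hudec, hwv, hwu', ← List.flatten_append, ← List.replicate_add], hwv⟩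

/-- A primitive word is not equal to any of its nontrivial rotations. -/
theorem rotate_ne_self' {β : Type*} {T : List β} (hprim : Primitive T)
    {m : ℕ} (hm : 0 < m) (hmn : m < T.length) : T.rotate m ≠ T := by
  intro heq
  have hrot : T.rotate m = T.drop m ++ T.take m := List.rotate_eq_drop_append_take hmn.le
  set u := T.take m with hu
  set v := T.drop m with hv
  have hT2 : T = u ++ v := (List.take_append_drop m T).symm
  have hcomm : u ++ v = v ++ u := by rw [← hT2, ← heq, hrot]
  obtain ⟨w, a, b, hwa, hwb⟩ :=
    comm_append_pow' (u.length + v.length) u v le_rfl hcomm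
  have hT3 : T = (List.replicate (a + b) w).flatten := by
    rw [hT2, hwa, hwb, ← List.flatten_append, ← List.replicate_add]
  have ha : a ≠ 0 := by
    rintro rfl; simp at hwa
    have : u.length = 0 := by rw [hwa]; simp
    simp [hu, hmn.le] at this; omega
  have hb : b ≠ 0 := by
    rintro rfl; simp at hwb
    have : v.length = 0 := by rw [hwb]; simp
    simp [hv] at this; omega
  have := hprim w (a + b) (by omega) hT3
  omega

/-- The rotations of a primitive word are pairwise distinct. -/
theorem rotate_inj' {β : Type*} {T : List β} (hprim : Primitive T)
    {i j : ℕ} (hi : i < T.length) (hj : j < T.length) (h : T.rotate i = T.rotate j) :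
    i = j := by
  wlog hle : i ≤ j generalizing i j
  · exact (this hj hi h.symm (by omega)).symm
  by_contra hne
  have hd : 0 < j - i ∧ j - i < T.length := by omega
  have key : T.rotate (j - i) = T := by
    have h1 : (T.rotate i).rotate (T.length - i) = T := by
      rw [List.rotate_rotate]
      have : i + (T.length - i) = T.length := by omega
      rw [this, List.rotate_length]
    have h2 : (T.rotate j).rotate (T.length - i) = T.rotate (j - i) := by
      rw [List.rotate_rotate]
      have : j + (T.length - i) = T.length + (j - i) := by omega
      rw [this, ← List.rotate_rotate, List.rotate_length]
    rw [← h2, ← h, h1]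
  exact rotate_ne_self' hprim hd.1 hd.2 key

/-- Every nonempty primitive string `T` of length `n` has exactly one
Lyndon conjugate: there is exactly one `i ∈ [0..n-1]` such that `conj_i(T)` is a Lyndon word. -/
theorem unique_lyndon_conjugate {α : Type*} [LinearOrder α]
    (T : List α) (hT : T ≠ []) (hprim : Primitive T) :
    ∃! i, i < T.length ∧ IsLyndon (T.rotate i) := by
  have hn : 0 < T.length := List.length_pos_iff.mpr hT
  -- uniqueness of Lyndon conjugate
  have uniq : ∀ i j, i < T.length → IsLyndon (T.rotate i) →
      j < T.length → IsLyndon (T.rotate j) → i = j := by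
    intro i j hi hLi hj hLj
    by_contra hne
    wlog hlt : i < j generalizing i j
    · exact this j i hj hLj hi hLi (Ne.symm hne) (by omega)
    have hlenj : (T.rotate j).length = T.length := List.length_rotate T j
    have h1 : List.Lex (· < ·) (T.rotate i) (T.rotate j) := by
      have := hLi.2 (j - i) (by omega) (by rw [List.length_rotate]; omega)
      rwa [List.rotate_rotate, (by omega : i + (j - i) = j)] at this
    have h2 : List.Lex (· < ·) (T.rotate j) (T.rotate i) := by
      have := hLj.2 (T.length - (j - i)) (by omega) (by rw [List.length_rotate]; omega)
      have e : (T.rotate j).rotate (T.length - (j - i)) = T.rotate i := by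
        rw [List.rotate_rotate]
        have : j + (T.length - (j - i)) = T.length + i := by omega
        rw [this, ← List.rotate_rotate, List.rotate_length]
      rwa [e] at this
    exact asymm h1 h2
  -- existence: take the lexicographically minimal rotation
  obtain ⟨i, hi, hmin⟩ := Finset.exists_min_image (Finset.range T.length)
    (fun k => T.rotate k) ⟨0, Finset.mem_range.mpr hn⟩
  rw [Finset.mem_range] at hi
  have hlyn : IsLyndon (T.rotate i) := by
    refine ⟨by simp [List.rotate_eq_nil_iff, hT], ?_⟩
    intro k hk hkl
    rw [List.length_rotate] at hkl
    rw [List.rotate_rotate]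
    set j := (i + k) % T.length with hjdef
    have hjlt : j < T.length := Nat.mod_lt _ hn
    have hrw : T.rotate (i + k) = T.rotate j := (List.rotate_mod T (i + k)).symm
    rw [hrw]
    have hne : T.rotate i ≠ T.rotate j := by
      intro he
      have := rotate_inj' hprim hi hjlt he
      rw [← this] at hjdef
      rcases lt_or_ge (i + k) T.length with hc | hc
      · rw [Nat.mod_eq_of_lt hc] at hjdef; omega
      · rw [Nat.mod_eq_sub_mod hc, Nat.mod_eq_of_lt (by omega)] at hjdef; omega
    have hle : T.rotate i ≤ T.rotate j := hmin j (Finset.mem_range.mpr hjlt)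
    exact lt_of_le_of_ne hle hne
  exact ⟨i, ⟨hi, hlyn⟩, fun j hj => uniq j i hj.1 hj.2 hi hlyn⟩
end

section
/- A nonempty string w is a Lyndon word if and only if w ≺_lex S for every proper nonempty suffix S of w. -/
private lemma lex_of_lex_append {α : Type*} [LinearOrder α] :
    ∀ (a b c : List α), List.Lex (· < ·) a (b ++ c) →
      List.Lex (· < ·) a b ∨ b <+: a
  | _, [], _, _ => Or.inr (List.nil_prefix)
  | [], (y :: b), c, _ => Or.inl List.Lex.nil
  | (x :: a), (y :: b), c, h => by
      cases h with
      | rel h => exact Or.inl (List.Lex.rel h)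
      | cons h =>
          rcases lex_of_lex_append a b c h with h' | h'
          · exact Or.inl (List.Lex.cons h')
          · exact Or.inr (List.prefix_cons_inj x |>.mpr h' |> fun h => h)

private lemma lex_append_of_lex {α : Type*} [LinearOrder α] :
    ∀ (a b c : List α), List.Lex (· < ·) a b → ¬ a <+: b →
      List.Lex (· < ·) a (b ++ c)
  | [], b, c, _, hp => absurd (List.nil_prefix) hp
  | (x :: a), (y :: b), c, h, hp => by
      cases h with
      | rel h => exact List.Lex.rel h
      | cons h =>
          refine List.Lex.cons (lex_append_of_lex a b c h ?_)
          intro hab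
          exact hp ((List.prefix_cons_inj x).mpr hab)

private lemma lex_of_append_left {α : Type*} [LinearOrder α] :
    ∀ (s u v : List α), List.Lex (· < ·) (s ++ u) (s ++ v) →
      List.Lex (· < ·) u v
  | [], _, _, h => h
  | (x :: s), u, v, h => by
      cases h with
      | rel h => exact absurd h (lt_irrefl x)
      | cons h => exact lex_of_append_left s u v h

private lemma lex_of_append_right {α : Type*} [LinearOrder α] :
    ∀ (a b s : List α), a.length = b.length →
      List.Lex (· < ·) (a ++ s) (b ++ s) →
      List.Lex (· < ·) a b ∨ a = b
  | [], [], _, _, _ => Or.inr rfl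
  | [], (y :: b), _, hl, _ => by simp at hl
  | (x :: a), [], _, hl, _ => by simp at hl
  | (x :: a), (y :: b), s, hl, h => by
      cases h with
      | rel h => exact Or.inl (List.Lex.rel h)
      | cons h =>
          rcases lex_of_append_right a b s (by simpa using hl) h with h' | h'
          · exact Or.inl (List.Lex.cons h')
          · exact Or.inr (by rw [h'])

/-- A nonempty string `w` is a Lyndon word if and only if
`w ≺_lex S` for every proper nonempty suffix `S` of `w`. -/
theorem lyndon_iff_smaller_than_proper_suffixes {α : Type*} [LinearOrder α]
    (w : List α) (hw : w ≠ []) :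
    IsLyndon w ↔ ∀ S : List α, S <:+ w → S ≠ w → S ≠ [] → List.Lex (· < ·) w S := by
  constructor
  · rintro ⟨-, hL⟩ S hS hSw hSne
    obtain ⟨v, hv⟩ := hS
    have hvne : v ≠ [] := by rintro rfl; exact hSw (by simpa using hv)
    have hvlen : 0 < v.length := List.length_pos_iff.mpr hvne
    have hSlen : 0 < S.length := List.length_pos_iff.mpr hSne
    have hwlen : w.length = v.length + S.length := by
      rw [← hv]; simp
    have hvlt : v.length < w.length := by omega
    have h1 : List.Lex (· < ·) w (S ++ v) := by
      have := hL v.length hvlen hvlt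
      rw [List.rotate_eq_drop_append_take hvlt.le, ← hv,
        List.drop_left, List.take_left] at this
      rw [← hv]; exact this
    rcases lex_of_lex_append w S v h1 with h | hpre
    · exact h
    · -- S is a border: prefix and suffix. Derive contradiction.
      exfalso
      obtain ⟨u, hu⟩ := hpre
      have hulen : u.length = v.length := by
        have : w.length = S.length + u.length := by rw [← hu]; simp
        omega
      have hSlt : S.length < w.length := by omega
      have h2 : List.Lex (· < ·) w (u ++ S) := by
        have := hL S.length hSlen hSlt
        rw [List.rotate_eq_drop_append_take hSlt.le, ← hu,
          List.drop_left, List.take_left] at this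
        rw [← hu]; exact this
      -- w = S ++ u = v ++ S
      have huv : List.Lex (· < ·) u v := by
        apply lex_of_append_left S
        rwa [← hu] at h1
      have hvu : List.Lex (· < ·) v u ∨ v = u := by
        apply lex_of_append_right v u S (by omega)
        rwa [← hv] at h2
      rcases hvu with h' | h'
      · exact irrefl_of (List.Lex (· < ·)) u (List.lex_trans lt_trans huv h')
      · subst h'; exact irrefl_of (List.Lex (· < ·)) v huv
  · intro h
    refine ⟨hw, fun i hi hilt => ?_⟩
    rw [List.rotate_eq_drop_append_take hilt.le]
    set S := w.drop i with hS
    have hSsuf : S <:+ w := List.drop_suffix i w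
    have hSlen : S.length = w.length - i := by simp [hS]
    have hSne : S ≠ [] := by
      intro h0
      have := congrArg List.length h0
      simp only [hSlen, List.length_nil] at this
      omega
    have hSw : S ≠ w := by
      intro h0
      have := congrArg List.length h0
      rw [hSlen] at this
      omega
    have hlex : List.Lex (· < ·) w S := h S hSsuf hSw hSne
    apply lex_append_of_lex
    · exact hlex
    · intro hpre
      have := hpre.length_le
      rw [hSlen] at this
      omega
end

section
/- The lexicographic order and the ≺_ω order coincide on Lyndon words: for any two Lyndon words u and v with u ≠ v, u ≺_lex v if and only if u ≺_ω v. -/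
section AuxLyndon

variable {α : Type*} [LinearOrder α]

/-- Infinite lexicographic strict order on sequences. -/
def SeqLt (f g : ℕ → α) : Prop :=
  ∃ k, (∀ j < k, f j = g j) ∧ f k < g k

theorem SeqLt.asymm {f g : ℕ → α} (h₁ : SeqLt f g) (h₂ : SeqLt g f) : False := by
  obtain ⟨k₁, ha₁, hl₁⟩ := h₁
  obtain ⟨k₂, ha₂, hl₂⟩ := h₂
  rcases lt_trichotomy k₁ k₂ with h | h | h
  · exact absurd (ha₂ k₁ h) (ne_of_gt hl₁)
  · subst h; exact lt_asymm hl₁ hl₂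
  · exact absurd (ha₁ k₂ h) (ne_of_gt hl₂)

theorem SeqLt.total_of_ne {f g : ℕ → α} (h : f ≠ g) : SeqLt f g ∨ SeqLt g f := by
  classical
  have hex : ∃ k, f k ≠ g k := Function.ne_iff.mp h
  have hne : f (Nat.find hex) ≠ g (Nat.find hex) := Nat.find_spec hex
  have hagree : ∀ j < Nat.find hex, f j = g j := fun j hj =>
    not_not.mp (Nat.find_min hex hj)
  rcases hne.lt_or_gt with hlt | hlt
  · exact Or.inl ⟨Nat.find hex, hagree, hlt⟩
  · exact Or.inr ⟨Nat.find hex, fun j hj => (hagree j hj).symm, hlt⟩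

/-- Decomposition of the lexicographic order: either a proper prefix, or a first
position of strict difference. -/
theorem lex_cases (d : α) : ∀ {l₁ l₂ : List α}, List.Lex (· < ·) l₁ l₂ →
    (l₁ <+: l₂ ∧ l₁.length < l₂.length) ∨
    ∃ k, k < l₁.length ∧ k < l₂.length ∧ (∀ j < k, l₁.getD j d = l₂.getD j d) ∧
      l₁.getD k d < l₂.getD k d := by
  intro l₁ l₂ h
  induction h with
  | nil => exact Or.inl ⟨List.nil_prefix, by simp⟩
  | @rel a l₁ b l₂ hab =>
      exact Or.inr ⟨0, by simp, by simp,
        fun j hj => absurd hj (Nat.not_lt_zero j), by simpa using hab⟩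
  | @cons a l₁ l₂ h ih =>
      rcases ih with ⟨⟨t, rfl⟩, hlen⟩ | ⟨k, hk1, hk2, hagree, hlt⟩
      · exact Or.inl ⟨⟨t, rfl⟩, by have := hlen; simp at this ⊢; omega⟩
      · refine Or.inr ⟨k + 1, by simpa using hk1, by simpa using hk2, ?_, by simpa using hlt⟩
        intro j hj
        cases j with
        | zero => rfl
        | succ j => simpa using hagree j (by omega)

variable [Inhabited α]

/-- If `u` is a proper nonempty prefix of a Lyndon word `v`, then `u ≺_ω v`. -/
theorem prefix_omegaLt {u v : List α} (hv : IsLyndon v) (hu0 : u ≠ [])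
    (hpre : u <+: v) (hlen : u.length < v.length) : OmegaLt u v := by
  classical
  set p := u.length with hp_def
  set n := v.length with hn_def
  have hp : 0 < p := List.length_pos_iff.mpr hu0
  set U : ℕ → α := omegaWord u with hU_def
  set V : ℕ → α := omegaWord v with hV_def
  -- getD of a prefix
  have hgetD : ∀ j < p, u.getD j default = v.getD j default := by
    intro j hj
    obtain ⟨t, rfl⟩ := hpre
    rw [List.getD_eq_getElem u default hj,
      List.getD_eq_getElem (u ++ t) default (lt_of_lt_of_le hj (by simp; omega))]
    exact (List.getElem_append_left _).symm
  -- basic facts about U and V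
  have hVval : ∀ j < n, V j = v.getD j default := by
    intro j hj
    show v.getD (j % n) default = v.getD j default
    rw [Nat.mod_eq_of_lt hj]
  have hUV : ∀ j < p, U j = V j := by
    intro j hj
    have h1 : U j = u.getD j default := by
      show u.getD (j % p) default = _
      rw [Nat.mod_eq_of_lt hj]
    rw [h1, hgetD j hj, ← hVval j (lt_trans hj hlen)]
  have hUper : ∀ j, U (j + p) = U j := by
    intro j
    show u.getD ((j + p) % p) default = u.getD (j % p) default
    rw [Nat.add_mod_right]
  have hVshift : ∀ j, V (j + p) = v.getD ((j + p) % n) default := fun j => rfl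
  -- the key fact from `v` being Lyndon: V ≺ its shift by p
  have hF : SeqLt V (fun j => V (j + p)) := by
    have hlex := hv.2 p hp hlen
    rcases lex_cases default hlex with ⟨_, hbad⟩ | ⟨m, hm1, _, hagree, hlt⟩
    · rw [List.length_rotate] at hbad
      exact absurd hbad (lt_irrefl _)
    · have hmn : m < n := hm1
      have hrot : ∀ j < n, (v.rotate p).getD j default = V (j + p) := by
        intro j hj
        have hj' : j < (v.rotate p).length := by rwa [List.length_rotate]
        rw [List.getD_eq_getElem _ default hj', List.getElem_rotate,
          hVshift j, List.getD_eq_getElem]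
      refine ⟨m, ?_, ?_⟩
      · intro j hj
        show V j = V (j + p)
        rw [hVval j (lt_trans hj hmn), ← hrot j (lt_trans hj hmn)]
        exact hagree j hj
      · show V m < V (m + p)
        rw [hVval m hmn, ← hrot m hmn]
        exact hlt
  -- U ≠ V
  have hne : U ≠ V := by
    intro hEq
    obtain ⟨m, _, hmlt⟩ := hF
    have hmlt' : V m < V (m + p) := hmlt
    have : V (m + p) = V m := by
      rw [← hEq, hUper m, hEq]
    rw [this] at hmlt'
    exact lt_irrefl _ hmlt'
  rcases SeqLt.total_of_ne hne with hgood | ⟨k, hagree, hlt⟩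
  · exact hgood
  · -- V ≺ U at position k; derive a contradiction with hF
    exfalso
    have hkp : p ≤ k := by
      by_contra hk
      push_neg at hk
      exact absurd hlt (by rw [hUV k hk]; exact lt_irrefl _)
    have hshift : SeqLt (fun j => V (j + p)) V := by
      refine ⟨k - p, ?_, ?_⟩
      · intro j hj
        have hjk : j + p < k := by omega
        show V (j + p) = V j
        have h1 : V (j + p) = U (j + p) := hagree (j + p) hjk
        rw [h1, hUper j, ← hagree j (by omega)]
      · show V (k - p + p) < V (k - p)
        have h1 : (k - p) + p = k := by omega
        rw [h1]
        calc V k < U k := hlt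
          _ = U (k - p) := by rw [← hUper (k - p), h1]
          _ = V (k - p) := (hagree (k - p) (by omega)).symm
    exact SeqLt.asymm hF hshift

/-- Forward direction: on Lyndon words, `≺_lex` implies `≺_ω`. -/
theorem lyndon_lex_to_omega {u v : List α} (hu : IsLyndon u) (hv : IsLyndon v)
    (h : List.Lex (· < ·) u v) : OmegaLt u v := by
  rcases lex_cases default h with ⟨hpre, hlen⟩ | ⟨k, hk1, hk2, hagree, hlt⟩
  · exact prefix_omegaLt hv hu.1 hpre hlen
  · refine ⟨k, ?_, ?_⟩
    · intro j hj
      show u.getD (j % u.length) default = v.getD (j % v.length) default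
      rw [Nat.mod_eq_of_lt (lt_trans hj hk1), Nat.mod_eq_of_lt (lt_trans hj hk2)]
      exact hagree j hj
    · show u.getD (k % u.length) default < v.getD (k % v.length) default
      rw [Nat.mod_eq_of_lt hk1, Nat.mod_eq_of_lt hk2]
      exact hlt

end AuxLyndon

/-- On Lyndon words, the lexicographic order and the ≺_ω order coincide:
for Lyndon words `u ≠ v`, `u ≺_lex v ↔ u ≺_ω v`. -/
theorem lex_iff_omega_on_lyndon {α : Type*} [LinearOrder α] [Inhabited α]
    (u v : List α) (hu : IsLyndon u) (hv : IsLyndon v) (huv : u ≠ v) :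
    List.Lex (· < ·) u v ↔ OmegaLt u v := by
  constructor
  · exact lyndon_lex_to_omega hu hv
  · intro h
    rcases @trichotomous _ (List.Lex (· < ·)) (List.Lex.trichotomous _) u v with h1 | h1 | h1
    · exact h1
    · exact absurd h1 huv
    · exact absurd (SeqLt.asymm h (lyndon_lex_to_omega hv hu h1)) not_false
end

section
/- For a Lyndon word w of length n, sorting the suffixes of w is equivalent to sorting the conjugates of w: for all i, j ∈ [1..n] with i ≠ j, conj_{i−1}(w) ≺_lex conj_{j−1}(w) if and only if w[i..n] ≺_lex w[j..n]. -/
private lemma lex_append_or_prefix {α : Type*} [LinearOrder α] {s t : List α}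
    (h : List.Lex (· < ·) s t) :
    s <+: t ∨ ∀ a b : List α, List.Lex (· < ·) (s ++ a) (t ++ b) := by
  induction h with
  | nil => exact Or.inl (List.nil_prefix)
  | @cons a l l' h ih =>
    rcases ih with hp | hu
    · rcases hp with ⟨t, ht⟩
      exact Or.inl ⟨t, by simp [← ht]⟩
    · exact Or.inr fun x y => List.Lex.cons (hu x y)
  | @rel a l b l' hab =>
    exact Or.inr fun x y => List.Lex.rel hab

private lemma lex_take {α : Type*} [LinearOrder α] {x y : List α}
    (h : List.Lex (· < ·) x y) (m : ℕ) :
    List.Lex (· < ·) (x.take m) (y.take m) ∨ x.take m = y.take m := by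
  induction h generalizing m with
  | nil =>
    cases m with
    | zero => exact Or.inr rfl
    | succ m => exact Or.inl List.Lex.nil
  | @cons a l l' h ih =>
    cases m with
    | zero => exact Or.inr rfl
    | succ m =>
      rcases ih m with h' | h'
      · exact Or.inl (by simpa [List.take] using List.Lex.cons (r := (· < ·)) (a := a) h')
      · exact Or.inr (by simp [List.take, h'])
  | @rel a l b l' hab =>
    cases m with
    | zero => exact Or.inr rfl
    | succ m => exact Or.inl (by simpa [List.take] using List.Lex.rel (r := (· < ·)) hab)

private lemma lex_append_left {α : Type*} [LinearOrder α] (u : List α) {a b : List α}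
    (h : List.Lex (· < ·) a b) : List.Lex (· < ·) (u ++ a) (u ++ b) := by
  induction u with
  | nil => exact h
  | cons x xs ih => exact List.Lex.cons ih


private lemma rotate_ne' {α : Type*} [LinearOrder α] {w : List α} (hw : IsLyndon w)
    {i j : ℕ} (hij : i < j) (hj : j < w.length) : w.rotate i ≠ w.rotate j := by
  intro heq
  set d := j - i with hd
  have hd0 : 0 < d := Nat.sub_pos_of_lt hij
  have hdn : d < w.length := lt_of_le_of_lt (Nat.sub_le _ _) hj
  have hv : (w.rotate i).rotate d = w.rotate i := by
    rw [List.rotate_rotate, hd, Nat.add_sub_cancel' (le_of_lt hij), ← heq]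
  have hwfix : w.rotate d = w := by
    have h1 : (w.rotate i).rotate (w.length - i) = w := by
      rw [List.rotate_rotate, Nat.add_sub_cancel' (le_of_lt (lt_trans hij hj)),
        List.rotate_length]
    calc w.rotate d = (((w.rotate i).rotate (w.length - i))).rotate d := by rw [h1]
    _ = ((w.rotate i).rotate d).rotate (w.length - i) := by
        simp only [List.rotate_rotate]
        congr 1
        omega
    _ = w := by rw [hv, h1]
  have := hw.2 d hd0 hdn
  rw [hwfix] at this
  exact asymm this this

private lemma key' {α : Type*} [LinearOrder α] {w : List α} (hw : IsLyndon w) {i j : ℕ}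
    (hi : i < w.length) (hj : j < w.length)
    (h : List.Lex (· < ·) (w.drop i) (w.drop j)) :
    List.Lex (· < ·) (w.rotate i) (w.rotate j) := by
  have hri : w.rotate i = w.drop i ++ w.take i := List.rotate_eq_drop_append_take hi.le
  have hrj : w.rotate j = w.drop j ++ w.take j := List.rotate_eq_drop_append_take hj.le
  rcases lex_append_or_prefix h with hp | hu
  · have hlen : w.length - i ≤ w.length - j := by simpa using hp.length_le
    have hne : w.drop i ≠ w.drop j := by
      intro he; rw [he] at h; exact asymm h h
    have hji : j < i := by
      rcases lt_trichotomy j i with h' | h' | h'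
      · exact h'
      · exact absurd (congrArg w.drop h'.symm) hne
      · omega
    obtain ⟨m, hm⟩ := hp
    set k := w.length - i + j with hk
    have hk0 : 0 < k := by omega
    have hkn : k < w.length := by omega
    have hmd : m = w.drop k := by
      have h2 : (w.drop i ++ m).drop (w.drop i).length = m := by simp
      rw [hm] at h2
      rw [← h2, List.drop_drop, List.length_drop]
      congr 1
      omega
    have hrj2 : w.rotate j = w.drop i ++ (m ++ w.take j) := by
      rw [hrj, ← hm, List.append_assoc]
    have hrk : w.rotate k = w.drop k ++ w.take k := List.rotate_eq_drop_append_take hkn.le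
    have htk : w.take j ++ (w.take k).drop j = w.take k := by
      conv_rhs => rw [← List.take_append_drop j (w.take k)]
      congr 1
      rw [List.take_take]
      congr 1
      omega
    have hpref : (m ++ w.take j) <+: w.rotate k :=
      ⟨(w.take k).drop j, by rw [hrk, ← hmd, List.append_assoc, htk]⟩
    have hrlen : (m ++ w.take j).length = i := by
      have := congrArg List.length hm
      simp only [List.length_append, List.length_drop] at this
      simp only [List.length_append, List.length_take]
      omega
    have hrtake : (w.rotate k).take i = m ++ w.take j := by
      have := List.prefix_iff_eq_take.mp hpref
      rw [← hrlen]
      exact this.symm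
    have hlyn := hw.2 k hk0 hkn
    rcases lex_take hlyn i with hlt | heqt
    · rw [hrtake] at hlt
      rw [hri, hrj2]
      exact lex_append_left _ hlt
    · rw [hrtake] at heqt
      exfalso
      apply rotate_ne' hw hji hi
      rw [hrj2, ← heqt, ← hri]
  · rw [hri, hrj]
    exact hu _ _

/-- For a Lyndon word `w`, sorting the suffixes of `w` is equivalent to
sorting the conjugates of `w`: for 0-based indices `i ≠ j`,
`conj_i(w) ≺_lex conj_j(w) ↔ w.drop i ≺_lex w.drop j`. -/
theorem lyndon_suffix_sort_eq_conjugate_sort {α : Type*} [LinearOrder α]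
    (w : List α) (hw : IsLyndon w)
    (i j : ℕ) (hi : i < w.length) (hj : j < w.length) (hij : i ≠ j) :
    (List.Lex (· < ·) (w.rotate i) (w.rotate j) ↔
      List.Lex (· < ·) (w.drop i) (w.drop j)) := by
  have hne : w.drop i ≠ w.drop j := by
    intro he
    have := congrArg List.length he
    simp only [List.length_drop] at this
    omega
  constructor
  · intro h
    rcases lt_trichotomy (w.drop i) (w.drop j) with h' | h' | h'
    · exact h'
    · exact absurd h' hne
    · exact absurd (key' hw hj hi h') fun h'' => asymm h h''
  · exact key' hw hi hj
end

section
/- Let P be a nonempty primitive string of length p and let k ≥ 1 be an integer. Then the BWTC of P^k is obtained from the BWTC of P by turning each character into a run of length k: for every i ∈ [1..p] and every l ∈ [1..k], BWTC_{P^k}[(i−1)·k + l] = BWTC_P[i]. -/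
/-- Non-strict lexicographic order on strings. -/
def LexLe {α : Type*} [LinearOrder α] (S T : List α) : Prop :=
  S = T ∨ List.Lex (· < ·) S T

section Aux
variable {α : Type*} [LinearOrder α]

lemma lexle_refl (S : List α) : LexLe S S := Or.inl rfl

instance : IsAntisymm (List α) LexLe := ⟨fun a b h1 h2 => by
  rcases h1 with rfl | h1; · rfl
  rcases h2 with rfl | h2; · rfl
  exact absurd h2 (asymm h1)⟩

lemma lex_append {Q R : List α} (hlen : Q.length = R.length)
    (h : List.Lex (· < ·) Q R) (A B : List α) :
    List.Lex (· < ·) (Q ++ A) (R ++ B) := by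
  induction h with
  | nil => simp at hlen
  | @cons a as bs h ih =>
      simp only [List.cons_append]
      exact List.Lex.cons (ih (by simpa using hlen))
  | @rel a as b bs h =>
      simp only [List.cons_append]
      exact List.Lex.rel h

lemma lex_pow {Q R : List α} (hlen : Q.length = R.length)
    (h : List.Lex (· < ·) Q R) (k : ℕ) (hk : 1 ≤ k) :
    List.Lex (· < ·) ((List.replicate k Q).flatten) ((List.replicate k R).flatten) := by
  obtain ⟨m, rfl⟩ := Nat.exists_eq_add_of_le hk
  rw [add_comm, List.replicate_succ, List.replicate_succ, List.flatten_cons, List.flatten_cons]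
  exact lex_append hlen h _ _

lemma lexle_pow {Q R : List α} (hlen : Q.length = R.length)
    (h : LexLe Q R) (k : ℕ) (hk : 1 ≤ k) :
    LexLe ((List.replicate k Q).flatten) ((List.replicate k R).flatten) := by
  rcases h with rfl | h
  · exact Or.inl rfl
  · exact Or.inr (lex_pow hlen h k hk)

lemma rep_rotate (P : List α) (r : ℕ) (hr : r ≤ P.length) :
    ∀ m, (List.replicate (m+1) (P.rotate r)).flatten =
      P.drop r ++ (List.replicate m P).flatten ++ P.take r
  | 0 => by simp [List.rotate_eq_drop_append_take hr]
  | m+1 => by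
    rw [List.replicate_succ, List.flatten_cons, rep_rotate P r hr m,
        List.rotate_eq_drop_append_take hr, List.replicate_succ, List.flatten_cons]
    set t := P.take r with ht
    set d := P.drop r with hd
    have hP : t ++ d = P := List.take_append_drop r P
    rw [← hP]
    simp [List.append_assoc]

lemma pow_rotate (P : List α) (k : ℕ) (hk : 1 ≤ k) (r : ℕ) (hr : r ≤ P.length) :
    ((List.replicate k P).flatten).rotate r = (List.replicate k (P.rotate r)).flatten := by
  obtain ⟨m, rfl⟩ := Nat.exists_eq_add_of_le hk
  rw [add_comm, rep_rotate P r hr m]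
  have hlen : r ≤ ((List.replicate (m+1) P).flatten).length := by
    simp only [List.length_flatten, List.map_replicate, List.sum_replicate, smul_eq_mul]
    calc r ≤ P.length := hr
      _ ≤ (m+1) * P.length := Nat.le_mul_of_pos_left _ (Nat.succ_pos m)
  rw [List.rotate_eq_drop_append_take hlen, List.replicate_succ, List.flatten_cons,
      List.drop_append_of_le_length hr, List.take_append_of_le_length hr]

lemma pow_rotate_mul_add (P : List α) (k : ℕ) (hk : 1 ≤ k) :
    ∀ (m r : ℕ), ((List.replicate k P).flatten).rotate (P.length * m + r) =
      ((List.replicate k P).flatten).rotate r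
  | 0, r => by simp
  | m+1, r => by
    have hTp : ((List.replicate k P).flatten).rotate P.length = (List.replicate k P).flatten := by
      rw [pow_rotate P k hk P.length le_rfl, List.rotate_length]
    have h1 : P.length * (m+1) + r = P.length + (P.length * m + r) := by ring
    rw [h1, ← List.rotate_rotate, hTp, pow_rotate_mul_add P k hk m r]

lemma flatMap_cons_perm {β γ : Type*} (l : List β) (x : β → γ) (h : β → List γ) :
    (l.flatMap (fun r => x r :: h r)).Perm (l.map x ++ l.flatMap h) := by
  induction l with
  | nil => simp
  | cons a l ih =>
    simp only [List.flatMap_cons, List.map_cons, List.cons_append]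
    refine List.Perm.cons _ ?_
    refine (ih.append_left (h a)).trans ?_
    rw [← List.append_assoc]
    refine ((List.perm_append_comm).append_right _).trans ?_
    rw [List.append_assoc]

lemma range_mul_map_mod_perm {β : Type*} (p : ℕ) (g : ℕ → β) :
    ∀ k, ((List.range (p * k)).map (fun j => g (j % p))).Perm
      ((List.range p).flatMap (fun r => List.replicate k (g r)))
  | 0 => by simp
  | k+1 => by
    rw [Nat.mul_succ, List.range_add, List.map_append]
    have h2 : ((List.range p).map (fun x => p*k + x)).map (fun j => g (j % p))
        = (List.range p).map g := by
      rw [List.map_map]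
      apply List.map_congr_left
      intro r hr
      simp only [List.mem_range] at hr
      simp [Nat.mul_add_mod, Nat.mod_eq_of_lt hr]
    rw [h2]
    refine ((range_mul_map_mod_perm p g k).append_right _).trans ?_
    refine (List.perm_append_comm).trans ?_
    simp only [List.replicate_succ]
    exact (flatMap_cons_perm _ g _).symm

lemma getElem?_flatten_blocks (k : ℕ) (g' : List α → List α) :
    ∀ (L : List (List α)) (i l : ℕ), i < L.length → l < k →
      ((L.map (fun Q => List.replicate k (g' Q))).flatten)[i*k+l]? = some (g' (L.getD i []))
  | [], i, l, hi, _ => absurd hi (by simp)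
  | Q :: L, 0, l, _, hlk => by
    simp only [List.map_cons, List.flatten_cons, Nat.zero_mul, Nat.zero_add]
    rw [List.getElem?_append_left (by simpa using hlk)]
    simp [hlk]
  | Q :: L, i+1, l, hi, hlk => by
    simp only [List.map_cons, List.flatten_cons]
    have h1 : (i+1)*k + l = k + (i*k + l) := by ring
    rw [h1, List.getElem?_append_right (by simp)]
    simp only [List.length_replicate, Nat.add_sub_cancel_left]
    exact getElem?_flatten_blocks k g' L i l (by simpa using hi) hlk

omit [LinearOrder α] in
lemma getLast?_pow (Q : List α) (hQ : Q ≠ []) :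
    ∀ k, 1 ≤ k → ((List.replicate k Q).flatten).getLast? = Q.getLast?
  | 1, _ => by simp
  | k+2, _ => by
    rw [List.replicate_succ, List.flatten_cons, List.getLast?_append,
        getLast?_pow Q hQ (k+1) (by omega)]
    cases hq : Q.getLast? with
    | none => exact absurd (List.getLast?_eq_none_iff.mp hq) hQ
    | some a => simp

end Aux

/-- For a nonempty primitive string `P` and `k ≥ 1`, the BWTC of `P^k`
is obtained from the BWTC of `P` by turning each character into a run of length `k`:
in 0-based indexing, `BWTC_{P^k}[i·k + l] = BWTC_P[i]` for all `i < |P|` and `l < k`. -/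
theorem bwtc_of_power {α : Type*} [LinearOrder α] [Inhabited α]
    (P : List α) (hP : P ≠ []) (hprim : Primitive P) (k : ℕ) (hk : 1 ≤ k)
    (L L' : List (List α))
    (hL : L.Perm (conjugates P)) (hLsorted : L.Pairwise LexLe)
    (hL' : L'.Perm (conjugates ((List.replicate k P).flatten)))
    (hL'sorted : L'.Pairwise LexLe) :
    ∀ i < P.length, ∀ l < k,
      (L'.getD (i * k + l) []).getLastI = (L.getD i []).getLastI := by
  intro i hi l hl
  have hp : 0 < P.length := List.length_pos_iff.mpr hP
  set g : ℕ → List α := fun r => (List.replicate k (P.rotate r)).flatten with hg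
  set f : List α → List α := fun Q => (List.replicate k Q).flatten with hf
  set M : List (List α) := (L.map (fun Q => List.replicate k (f Q))).flatten with hM
  have hlenL : L.length = P.length := by
    rw [hL.length_eq]; simp [conjugates]
  have hmem_len : ∀ Q ∈ L, Q.length = P.length := by
    intro Q hQ
    have := hL.subset hQ
    simp only [conjugates, List.mem_map, List.mem_range] at this
    obtain ⟨r, _, rfl⟩ := this
    simp
  have hTlen : ((List.replicate k P).flatten).length = P.length * k := by
    simp only [List.length_flatten, List.map_replicate, List.sum_replicate, smul_eq_mul]
    ring
  have hT : conjugates ((List.replicate k P).flatten)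
      = (List.range (P.length * k)).map (fun j => g (j % P.length)) := by
    unfold conjugates
    rw [hTlen]
    apply List.map_congr_left
    intro j hj
    have h1 : ((List.replicate k P).flatten).rotate j
        = ((List.replicate k P).flatten).rotate (j % P.length) := by
      conv_lhs => rw [← Nat.div_add_mod j P.length]
      exact pow_rotate_mul_add P k hk _ _
    rw [h1, pow_rotate P k hk _ (le_of_lt (Nat.mod_lt j hp))]
  have hperm : M.Perm (conjugates ((List.replicate k P).flatten)) := by
    rw [hT]
    have s1 : M.Perm (((conjugates P).map (fun Q => List.replicate k (f Q))).flatten) :=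
      (hL.map _).flatten
    have s2 : (((conjugates P).map (fun Q => List.replicate k (f Q))).flatten)
        = (List.range P.length).flatMap (fun r => List.replicate k (g r)) := by
      simp only [conjugates, List.map_map, List.flatMap_def]
      rfl
    rw [s2] at s1
    exact s1.trans (range_mul_map_mod_perm P.length g k).symm
  have hMsorted : M.Pairwise LexLe := by
    rw [hM, List.pairwise_flatten]
    constructor
    · intro b hb
      simp only [List.mem_map] at hb
      obtain ⟨Q, _, rfl⟩ := hb
      exact List.pairwise_replicate.mpr (Or.inr (lexle_refl _))
    · rw [List.pairwise_map]
      refine hLsorted.imp_of_mem ?_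
      intro Q R hQ hR hQR x hx y hy
      rw [List.eq_of_mem_replicate hx, List.eq_of_mem_replicate hy]
      exact lexle_pow ((hmem_len Q hQ).trans (hmem_len R hR).symm) hQR k hk
  have hL'M : L' = M := List.Perm.eq_of_pairwise
    (fun a b _ _ h1 h2 => by
      rcases h1 with rfl | h1; · rfl
      rcases h2 with rfl | h2; · rfl
      exact absurd h2 (asymm h1)) hL'sorted hMsorted (hL'.trans hperm.symm)
  have hiL : i < L.length := by omega
  have hidx : M[i*k+l]? = some (f (L.getD i [])) :=
    getElem?_flatten_blocks k f L i l hiL hl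
  rw [hL'M, List.getD_eq_getElem?_getD, hidx]
  simp only [Option.getD_some]
  have hQmem : L.getD i [] ∈ L := by
    rw [List.getD_eq_getElem?_getD, List.getElem?_eq_getElem hiL]
    simp only [Option.getD_some]
    exact List.getElem_mem hiL
  have hQne : L.getD i [] ≠ [] := by
    intro hcon
    have := hmem_len _ hQmem
    rw [hcon] at this
    simp at this
    omega
  rw [List.getLastI_eq_getLast?, List.getLastI_eq_getLast?, hf]
  rw [getLast?_pow _ hQne k hk]
end

section
/- Let T_1, …, T_x be the Lyndon factorization of a nonempty string T = T_1 ⋯ T_x, and let $ be a character strictly smaller than every character occurring in T. Then the Lyndon factorization of the string T' := T_1 ⋯ T_{x−1} ($T_x) is exactly T_1, …, T_{x−1}, $T_x; in particular $T_x is the last Lyndon factor of T'. -/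
namespace LyndonAux

open List

variable {α : Type*} [LinearOrder α]

lemma le_append (l t : List α) : l ≤ l ++ t := by
  induction l with
  | nil =>
    cases t with
    | nil => simp
    | cons a t => exact le_of_lt List.Lex.nil
  | cons a l ih =>
    rcases lt_or_eq_of_le ih with h | h
    · exact le_of_lt (List.Lex.cons h)
    · simp only [List.cons_append]
      rw [← h]

lemma prefix_le {l l' : List α} (h : l <+: l') : l ≤ l' := by
  obtain ⟨t, rfl⟩ := h; exact le_append l t

lemma append_lt_append_left_iff (s u v : List α) : s ++ u < s ++ v ↔ u < v := by
  induction s with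
  | nil => rfl
  | cons a s ih =>
    simp only [List.cons_append]
    exact (List.lex_cons_iff.trans ih)

lemma lt_of_lt_of_not_prefix :
    ∀ {t w : List α}, t < w → ¬ t <+: w → ∀ z : List α, t ++ z < w := by
  intro t w h
  induction h with
  | nil => intro hp; exact absurd (List.nil_prefix) hp
  | @cons a l₁ l₂ h ih =>
    intro hp z
    have : ¬ l₁ <+: l₂ := fun hh => hp (List.cons_prefix_cons.mpr ⟨rfl, hh⟩)
    exact List.Lex.cons (ih this z)
  | rel h => intro _ z; exact List.Lex.rel h

lemma not_lex_of_head_lt {a b : α} {l m : List α} (h : b < a) :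
    ¬ (a :: l) < (b :: m) := by
  intro hlt
  cases hlt with
  | cons h' => exact lt_irrefl _ h
  | rel h' => exact lt_asymm h h'

/-- A Lyndon word is lexicographically smaller than each of its nonempty proper suffixes. -/
lemma _root_.IsLyndon.lt_suffix {u t : List α} (hw : IsLyndon (u ++ t))
    (hu : u ≠ []) (ht : t ≠ []) : u ++ t < t := by
  have hul : 0 < u.length := List.length_pos_iff.mpr hu
  have htl : 0 < t.length := List.length_pos_iff.mpr ht
  have hrot1 : u ++ t < t ++ u := by
    have h1 : u.length < (u ++ t).length := by rw [List.length_append]; omega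
    have h3 := hw.2 u.length hul h1
    rwa [rotate_eq_drop_append_take (le_of_lt h1), List.drop_left, List.take_left] at h3
  by_contra hwt
  push_neg at hwt
  have htw : t < u ++ t := lt_of_le_of_ne hwt (by
    intro hh
    have := congrArg List.length hh
    rw [List.length_append] at this
    omega)
  by_cases hp : t <+: u ++ t
  · obtain ⟨r, hr⟩ := hp
    have hrne : r ≠ [] := by
      intro hh
      rw [hh, List.append_nil] at hr
      have := congrArg List.length hr
      rw [List.length_append] at this
      omega
    have hru : r < u := by
      rw [← hr] at hrot1
      exact (append_lt_append_left_iff t r u).mp hrot1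
    have hrlen : r.length = u.length := by
      have := congrArg List.length hr
      simp only [List.length_append] at this
      omega
    have hnp : ¬ r <+: u := by
      intro hh
      exact lt_irrefl u (hh.eq_of_length hrlen ▸ hru)
    have h2 : r ++ t < u ++ t :=
      lt_of_lt_of_le (lt_of_lt_of_not_prefix hru hnp t) (le_append u t)
    have hrot2 : u ++ t < r ++ t := by
      have h1 : t.length < (u ++ t).length := by rw [List.length_append]; omega
      have h3 := hw.2 t.length htl h1
      rw [← hr] at h3
      rwa [rotate_eq_drop_append_take (by rw [List.length_append]; omega : t.length ≤ (t ++ r).length),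
        List.drop_left, List.take_left, hr] at h3
    exact lt_irrefl _ (lt_trans hrot2 h2)
  · have := lt_of_lt_of_not_prefix htw hp u
    exact lt_irrefl _ (lt_trans hrot1 this)

lemma chain_le {g : List α} {gs : List (List α)}
    (h : List.Chain' (fun a b => ¬ List.Lex (· < ·) a b) (g :: gs)) :
    ∀ x ∈ gs, x ≤ g := by
  induction gs generalizing g with
  | nil => intro x hx; simp at hx
  | cons h' gs ih =>
    rw [List.Chain', List.isChain_cons_cons] at h
    intro x hx
    rcases List.mem_cons.mp hx with rfl | hx
    · exact le_of_not_gt h.1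
    · exact le_trans (ih h.2 x hx) (le_of_not_gt h.1)

lemma scan (f b : List α) (hf : IsLyndon f) (hbf : b < f) :
    ∀ (hs : List (List α)) (t : List α), (∀ h ∈ hs, h ≠ [] ∧ h ≤ b) → t ≠ [] →
      t <+: hs.flatten → (∃ u, u ≠ [] ∧ u ++ t = f) → False := by
  intro hs
  induction hs with
  | nil =>
    intro t _ ht hpre _
    simp only [List.flatten_nil, List.prefix_nil] at hpre
    exact ht hpre
  | cons h hs ih =>
    rintro t hall ht hpre ⟨u, hu, huf⟩
    obtain ⟨hhne, hhb⟩ := hall h ((List.mem_cons_self (a := h) (l := hs)))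
    have hft : f < t := by
      subst huf
      exact IsLyndon.lt_suffix hf hu ht
    have hcontr : ¬ t ≤ b := fun hh =>
      lt_irrefl f (lt_trans (lt_of_lt_of_le hft hh) hbf)
    rw [List.flatten_cons] at hpre
    rcases prefix_or_prefix_of_prefix hpre (List.prefix_append h hs.flatten) with hth | hht
    · exact hcontr (le_trans (prefix_le hth) hhb)
    · obtain ⟨t', rfl⟩ := hht
      by_cases ht' : t' = []
      · subst ht'
        simp only [List.append_nil] at hcontr
        exact hcontr hhb
      · refine ih t' (fun x hx => hall x (List.mem_cons_of_mem h hx)) ht'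
          ((prefix_append_right_inj h).mp hpre) ⟨u ++ h, ?_, by rw [List.append_assoc, huf]⟩
        simp [hu]

lemma head_min (g : List α) (gs : List (List α))
    (hlyn : ∀ x ∈ g :: gs, IsLyndon x)
    (hchain : List.Chain' (fun a b => ¬ List.Lex (· < ·) a b) (g :: gs))
    (f s : List α) (hf : IsLyndon f)
    (heq : f ++ s = g ++ gs.flatten) : f ≤ g := by
  by_contra hgf
  push_neg at hgf
  have hfp : f <+: g ++ gs.flatten := ⟨s, heq⟩
  have hgp : g <+: g ++ gs.flatten := List.prefix_append g _
  rcases prefix_or_prefix_of_prefix hfp hgp with hfg | hgf'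
  · exact absurd (prefix_le hfg) (not_le_of_gt hgf)
  · obtain ⟨f₂, rfl⟩ := hgf'
    by_cases hf₂ : f₂ = []
    · subst hf₂; rw [List.append_nil] at hgf; exact lt_irrefl g hgf
    · have hpre : f₂ <+: gs.flatten := by
        rw [List.append_assoc] at heq
        exact ⟨s, (List.append_cancel_left heq : f₂ ++ s = gs.flatten)⟩
      exact scan (g ++ f₂) g hf hgf gs f₂
        (fun x hx => ⟨(hlyn x (List.mem_cons_of_mem g hx)).1, chain_le hchain x hx⟩)
        hf₂ hpre ⟨g, (hlyn g ((List.mem_cons_self (a := g) (l := gs)))).1, rfl⟩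

/-- Uniqueness of the Lyndon factorization. -/
lemma unique : ∀ (fs : List (List α)) (gs : List (List α)) (S : List α),
    IsLyndonFactorization fs S → IsLyndonFactorization gs S → fs = gs := by
  intro fs
  induction fs with
  | nil =>
    rintro gs S ⟨h1, _, _⟩ ⟨h1', h2', _⟩
    cases gs with
    | nil => rfl
    | cons g gs =>
      exfalso
      rw [← h1] at h1'
      simp only [List.flatten_nil, List.flatten_cons] at h1'
      have := (h2' g ((List.mem_cons_self (a := g) (l := gs)))).1
      exact this (List.append_eq_nil_iff.mp h1').1
  | cons f fs ih =>
    rintro gs S ⟨h1, h2, h3⟩ ⟨h1', h2', h3'⟩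
    cases gs with
    | nil =>
      exfalso
      rw [← h1'] at h1
      simp only [List.flatten_nil, List.flatten_cons] at h1
      exact (h2 f ((List.mem_cons_self (a := f) (l := fs)))).1 (List.append_eq_nil_iff.mp h1).1
    | cons g gs =>
      have heq : f ++ fs.flatten = g ++ gs.flatten := by
        have := h1.trans h1'.symm
        simpa using this
      have hfg : f = g :=
        le_antisymm
          (head_min g gs h2' h3' f fs.flatten (h2 f ((List.mem_cons_self (a := f) (l := fs)))) heq)
          (head_min f fs h2 h3 g gs.flatten (h2' g ((List.mem_cons_self (a := g) (l := gs)))) heq.symm)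
      subst hfg
      have htail : fs.flatten = gs.flatten := List.append_cancel_left heq
      have := ih gs fs.flatten
        ⟨rfl, fun x hx => h2 x (List.mem_cons_of_mem f hx), h3.tail⟩
        ⟨htail.symm, fun x hx => h2' x (List.mem_cons_of_mem f hx), h3'.tail⟩
      rw [this]

end LyndonAux

/-- If `fs = T_1, …, T_x` is the Lyndon factorization of `T` and `c`
is a character strictly smaller than every character occurring in `T`, then the Lyndon
factorization of `T' := T_1 ⋯ T_{x-1} (c T_x)` is exactly `T_1, …, T_{x-1}, c T_x`;
in particular `c T_x` is the last Lyndon factor of `T'`. -/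
theorem lyndon_factorization_prepend_dollar {α : Type*} [LinearOrder α]
    (T : List α) (hT : T ≠ [])
    (fs : List (List α)) (hfs : IsLyndonFactorization fs T) (hne : fs ≠ [])
    (c : α) (hc : ∀ a ∈ T, c < a) :
    ∀ gs : List (List α),
      IsLyndonFactorization gs (fs.dropLast.flatten ++ (c :: fs.getLast hne)) ↔
        gs = fs.dropLast ++ [c :: fs.getLast hne] := by
  classical
  obtain ⟨hflat, hlyn, hchain⟩ := hfs
  set L := fs.getLast hne with hL
  have hfs_eq : fs.dropLast ++ [L] = fs := List.dropLast_append_getLast hne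
  have hLmem : L ∈ fs := List.getLast_mem hne
  have hLsub : ∀ a ∈ L, a ∈ T := fun a ha => by
    rw [← hflat]; exact List.mem_flatten.mpr ⟨L, hLmem, ha⟩
  -- the candidate factorization is indeed a Lyndon factorization
  have hEx : IsLyndonFactorization (fs.dropLast ++ [c :: L])
      (fs.dropLast.flatten ++ (c :: L)) := by
    refine ⟨by simp, ?_, ?_⟩
    · intro f hf
      rcases List.mem_append.mp hf with hf | hf
      · exact hlyn f (by rw [← hfs_eq]; exact List.mem_append_left _ hf)
      · rw [List.mem_singleton] at hf
        subst hf
        refine ⟨List.cons_ne_nil _ _, ?_⟩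
        intro i hi0 hilen
        rw [List.rotate_eq_drop_append_take (le_of_lt hilen)]
        obtain ⟨n, rfl⟩ : ∃ n, i = n + 1 := ⟨i - 1, by omega⟩
        have hdrop : (c :: L).drop (n + 1) = L.drop n := rfl
        have hn : n < L.length := by
          simp only [List.length_cons] at hilen; omega
        have hne' : L.drop n ≠ [] := by
          intro hh
          have := List.drop_eq_nil_iff.mp hh
          omega
        obtain ⟨d, m, hdm⟩ := List.exists_cons_of_ne_nil hne'
        have hdL : d ∈ L := List.drop_subset n L (hdm ▸ (List.mem_cons_self (a := d) (l := m)))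
        rw [hdrop, hdm, List.cons_append]
        exact List.Lex.rel (hc d (hLsub d hdL))
    · rw [List.Chain', List.isChain_append]
      refine ⟨?_, List.isChain_singleton _, ?_⟩
      · have hch2 : List.Chain' (fun a b => ¬ List.Lex (· < ·) a b) (fs.dropLast ++ [L]) := by
          rw [hfs_eq]; exact hchain
        exact hch2.prefix (List.prefix_append _ _)
      · intro x hx y hy
        simp only [List.head?_cons, Option.mem_def, Option.some.injEq] at hy
        subst hy
        have hxmem : x ∈ fs.dropLast := List.mem_of_mem_getLast? hx
        have hxfs : x ∈ fs := List.dropLast_subset fs hxmem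
        obtain ⟨a, x', rfl⟩ := List.exists_cons_of_ne_nil (hlyn _ hxfs).1
        have haT : a ∈ T := by
          rw [← hflat]; exact List.mem_flatten.mpr ⟨_, hxfs, (List.mem_cons_self (a := a) (l := x'))⟩
        exact LyndonAux.not_lex_of_head_lt (hc a haT)
  intro gs
  constructor
  · intro hgs
    exact LyndonAux.unique gs (fs.dropLast ++ [c :: L]) _ hgs hEx
  · rintro rfl
    exact hEx
end

section
/- Let T be a nonempty string with Lyndon factorization T = T_1 T_2 ⋯ T_t. Then the suffixes of T starting at the beginnings of the Lyndon factors are strictly decreasing in lexicographic order: for every x ∈ [1..t−1], T_{x+1} T_{x+2} ⋯ T_t ≺_lex T_x T_{x+1} ⋯ T_t. -/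
namespace LyndonAux

variable {α : Type*} [LinearOrder α]

lemma lex_append_right (s : List α) {t : List α} (h : t ≠ []) :
    List.Lex (· < ·) s (s ++ t) := by
  induction s with
  | nil => cases t with
    | nil => exact absurd rfl h
    | cons a t => exact List.Lex.nil
  | cons a s ih => exact List.Lex.cons ih

lemma lex_append_left (p : List α) {s t : List α} (h : List.Lex (· < ·) s t) :
    List.Lex (· < ·) (p ++ s) (p ++ t) := by
  induction p with
  | nil => simpa
  | cons a p ih => exact List.Lex.cons ih

lemma lex_of_diff (p : List α) {a b : α} (h : a < b) (u v : List α) :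
    List.Lex (· < ·) (p ++ a :: u) (p ++ b :: v) := by
  induction p with
  | nil => exact List.Lex.rel h
  | cons c p ih => exact List.Lex.cons ih

lemma lex_decomp {s t : List α} (h : List.Lex (· < ·) s t) :
    (∃ u, u ≠ [] ∧ t = s ++ u) ∨
      ∃ p a b u v, a < b ∧ s = p ++ a :: u ∧ t = p ++ b :: v := by
  induction h with
  | @nil b l => exact Or.inl ⟨b :: l, by simp, by simp⟩
  | @cons a l₁ l₂ h ih =>
      rcases ih with ⟨u, hu, rfl⟩ | ⟨p, x, y, u, v, hxy, rfl, rfl⟩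
      · exact Or.inl ⟨u, hu, rfl⟩
      · exact Or.inr ⟨a :: p, x, y, u, v, hxy, rfl, rfl⟩
  | @rel a l₁ b l₂ h => exact Or.inr ⟨[], a, b, l₁, l₂, h, rfl, rfl⟩

lemma main : ∀ n (f : List α), IsLyndon f → ∀ gs : List (List α),
    gs.flatten.length < n → (∀ g ∈ gs, IsLyndon g) →
    (∀ g ∈ gs, ¬ List.Lex (· < ·) f g) →
    List.Lex (· < ·) gs.flatten (f ++ gs.flatten) := by
  intro n
  induction n with
  | zero => intro f _ gs h; exact absurd h (Nat.not_lt_zero _)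
  | succ n ih =>
    intro f hf gs hlen hlyn hle
    haveI := List.Lex.trichotomous (α := α) (· < ·)
    haveI := List.Lex.asymm (α := α) (· < ·)
    cases gs with
    | nil => simpa using lex_append_right ([] : List α) hf.1
    | cons g gs' =>
      have hg : IsLyndon g := hlyn g (by simp)
      have hgne : g ≠ [] := hg.1
      have hglen : 0 < g.length := List.length_pos_iff.mpr hgne
      have hlen' : gs'.flatten.length < n := by
        simp only [List.flatten_cons, List.length_append] at hlen
        omega
      have ihs' : List.Lex (· < ·) gs'.flatten (f ++ gs'.flatten) :=
        ih f hf gs' hlen' (fun x hx => hlyn x (by simp [hx]))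
          (fun x hx => hle x (by simp [hx]))
      set s' := gs'.flatten with hs'
      rw [List.flatten_cons]
      rcases trichotomous_of (List.Lex (· < ·)) g f with hgf | heq | hfg
      · -- g ≺ f
        rcases lex_decomp hgf with ⟨w, hw, rfl⟩ | ⟨p, a, b, u, v, hab, hge, hfe⟩
        · -- f = g ++ w, w ≠ []
          have hwlen : 0 < w.length := List.length_pos_iff.mpr hw
          have hrot : List.Lex (· < ·) (g ++ w) ((g ++ w).rotate g.length) :=
            hf.2 g.length hglen (by simp; omega)
          rw [List.rotate_append_length_eq] at hrot
          rcases lex_decomp hrot with ⟨z, hz, hzeq⟩ | ⟨p, a, b, u, v, hab, hfe, hwge⟩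
          · exfalso
            have hl := congrArg List.length hzeq
            simp [List.length_append] at hl
            exact hz (List.length_eq_zero_iff.mp (by omega))
          · -- f = p ++ a :: u, w ++ g = p ++ b :: v, a < b
            rw [List.append_assoc]
            apply lex_append_left g
            -- goal: s' ≺ w ++ (g ++ s')
            have hwg : w ++ (g ++ s') = p ++ b :: (v ++ s') := by
              rw [← List.append_assoc, hwge]; simp
            rw [hwg]
            have hfsmall : ∀ z : List α,
                List.Lex (· < ·) (g ++ w) (p ++ b :: (v ++ z)) := by
              intro z
              rw [hfe]
              exact lex_of_diff p hab u (v ++ z)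
            rcases trichotomous_of (List.Lex (· < ·)) s' (g ++ w) with h1 | h1 | h1
            · exact List.lex_trans (fun h₁ h₂ => lt_trans h₁ h₂) h1 (hfsmall s')
            · have h2 := hfsmall s'
              rwa [← h1] at h2
            · rcases lex_decomp h1 with ⟨s'', hs'', hseq⟩ | ⟨q, c, d, m, m', hcd, hfe2, hse⟩
              · -- s' = (g ++ w) ++ s''
                have hs2 : s' = p ++ a :: (u ++ s'') := by
                  rw [hseq, hfe]; simp
                rw [hs2, hs'.symm.trans hs2]
                exact lex_of_diff p hab _ _
              · -- genuine diff (g++w) ≺ s' : contradiction with ihs'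
                exfalso
                have hlt : List.Lex (· < ·) ((g ++ w) ++ s') s' := by
                  rw [hfe2]
                  conv_rhs => rw [hse]
                  simp only [List.append_assoc, List.cons_append]
                  exact lex_of_diff q hcd _ _
                exact asymm_of (List.Lex (· < ·)) ihs' hlt
        · -- genuine diff between g and f
          rw [hge, hfe]
          simp only [List.append_assoc, List.cons_append]
          exact lex_of_diff p hab _ _
      · -- g = f
        rw [heq]
        exact lex_append_left f ihs'
      · exact absurd hfg (hle g (by simp))

end LyndonAux

/-- The suffixes of `T` starting at the beginnings of the Lyndon factors
are strictly decreasing in lexicographic order: `T_{x+1} ⋯ T_t ≺_lex T_x ⋯ T_t`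
(0-based: for every `x` with `x + 1 < t`). -/


theorem lyndon_factor_suffixes_decreasing {α : Type*} [LinearOrder α]
    (T : List α) (hT : T ≠ [])
    (fs : List (List α)) (hfs : IsLyndonFactorization fs T) :
    ∀ x, x + 1 < fs.length →
      List.Lex (· < ·) (fs.drop (x + 1)).flatten (fs.drop x).flatten := by
  obtain ⟨hflat, hlyn, hchain⟩ := hfs
  intro x hx
  haveI hoc := List.Lex.isOrderConnected (α := α) (· < ·)
  haveI : IsTrans (List α)
      (fun a b => ¬ List.Lex (· < ·) a b) := by
    constructor
    intro a b c hab hbc hac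
    exact ((IsOrderConnected.conn a b c hac).elim hab hbc)
  have hpw : fs.Pairwise (fun a b => ¬ List.Lex (· < ·) a b) :=
    List.isChain_iff_pairwise.mp hchain
  have hxlt : x < fs.length := by omega
  have hdrop : fs.drop x = fs[x] :: fs.drop (x + 1) :=
    List.drop_eq_getElem_cons hxlt
  have hpwd : (fs.drop x).Pairwise (fun a b => ¬ List.Lex (· < ·) a b) :=
    hpw.sublist (List.drop_sublist x fs)
  rw [hdrop] at hpwd
  have hle : ∀ g ∈ fs.drop (x + 1), ¬ List.Lex (· < ·) fs[x] g :=
    (List.pairwise_cons.mp hpwd).1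
  rw [hdrop, List.flatten_cons]
  exact LyndonAux.main ((fs.drop (x + 1)).flatten.length + 1) fs[x]
    (hlyn _ (List.getElem_mem hxlt)) (fs.drop (x + 1)) (Nat.lt_succ_self _)
    (fun g hg => hlyn g (List.mem_of_mem_drop hg)) hle
end

section
/- Let S be a string of length n and let F be its non-decreasing sorted rearrangement. Define LF(i) := select_F(S[i], rank_S(S[i], i)) and FL(i) := select_S(F[i], rank_F(F[i], i)) for i ∈ [1..n], where rank_X(c, i) counts occurrences of c in X[1..i] and select_X(c, j) is the position of the j-th occurrence of c in X. Then LF and FL are well-defined permutations of [1..n] and are mutually inverse: FL(LF(i)) = i and LF(FL(i)) = i for every i ∈ [1..n]. -/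
/-- `rank X c i`: the number of occurrences of `c` in `X[1..i]` (1-based prefix of length `i`). -/
def rank {α : Type*} [DecidableEq α] (X : List α) (c : α) (i : ℕ) : ℕ :=
  (X.take i).count c

/-- `select X c j`: the (1-based) position of the `j`-th occurrence of `c` in `X`. -/
def select {α : Type*} [DecidableEq α] [Inhabited α] (X : List α) (c : α) (j : ℕ) : ℕ :=
  ((List.range X.length).filter (fun i => X.getD i default = c)).getD (j - 1) 0 + 1

section Helpers
set_option linter.unusedSectionVars false
variable {α : Type*} [DecidableEq α] [Inhabited α]

def posList (X : List α) (c : α) : List ℕ :=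
  (List.range X.length).filter (fun i => X.getD i default = c)

lemma posList_sorted (X : List α) (c : α) : (posList X c).Pairwise (· < ·) :=
  (List.pairwise_lt_range).filter _

lemma mem_posList {X : List α} {c : α} {p : ℕ} :
    p ∈ posList X c ↔ p < X.length ∧ X.getD p default = c := by
  simp [posList, List.mem_filter]

lemma select_posList (X : List α) (c : α) (k : ℕ) :
    select X c (k + 1) = (posList X c).getD k 0 + 1 := by
  simp [select, posList]

lemma range_filter_lt {m n : ℕ} (h : m ≤ n) :
    (List.range n).filter (fun i => i < m) = List.range m := by
  obtain ⟨k, rfl⟩ := Nat.exists_eq_add_of_le h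
  rw [List.range_add, List.filter_append]
  rw [List.filter_eq_self.2 (by simp [List.mem_range]),
      List.filter_eq_nil_iff.2 (by simp), List.append_nil]

lemma take_eq_map {X : List α} {m : ℕ} (h : m ≤ X.length) :
    X.take m = (List.range m).map (fun i => X.getD i default) := by
  apply List.ext_getElem
  · simp; omega
  · intro i h1 h2
    simp only [List.getElem_take, List.getElem_map, List.getElem_range]
    exact (List.getD_eq_getElem _ _ (by simp at h1; omega)).symm

lemma rank_eq_length {X : List α} {c : α} {m : ℕ} (h : m ≤ X.length) :
    rank X c m = ((posList X c).filter (fun i => i < m)).length := by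
  rw [posList, List.filter_comm, range_filter_lt h]
  rw [rank, take_eq_map h, List.count_eq_countP, List.countP_map,
      List.countP_eq_length_filter]
  rfl

lemma posList_length (X : List α) (c : α) : (posList X c).length = X.count c := by
  have := rank_eq_length (X := X) (c := c) (le_refl X.length)
  rw [rank, List.take_length] at this
  rw [this, List.filter_eq_self.2]
  intro p hp
  simpa using (mem_posList.1 hp).1

lemma filter_lt_sorted {L : List ℕ} (hs : L.Pairwise (· < ·)) {k : ℕ} (hk : k < L.length) :
    L.filter (fun i => i < L[k] + 1) = L.take (k + 1) := by
  obtain ⟨p, hp⟩ : ∃ p, L[k] = p := ⟨_, rfl⟩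
  rw [hp]
  nth_rewrite 1 [← List.take_append_drop (k + 1) L]
  rw [List.filter_append, List.filter_eq_self.2, List.filter_eq_nil_iff.2, List.append_nil]
  · intro x hx
    obtain ⟨j, hj, rfl⟩ := List.mem_iff_getElem.1 hx
    rw [List.getElem_drop]
    have h1 : L.get ⟨k, by omega⟩ < L.get ⟨k + 1 + j, by simp at hj; omega⟩ :=
      hs.rel_get_of_lt (by simp [Fin.mk_lt_mk]; omega)
    simp only [List.get_eq_getElem] at h1
    simp only [decide_eq_true_eq]
    omega
  · intro x hx
    obtain ⟨j, hj, rfl⟩ := List.mem_iff_getElem.1 hx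
    simp only [List.length_take, lt_min_iff] at hj
    rw [List.getElem_take]
    simp only [decide_eq_true_eq]
    rcases Nat.lt_or_ge j k with h | h
    · have h1 : L.get ⟨j, by omega⟩ < L.get ⟨k, hk⟩ :=
        hs.rel_get_of_lt (by simp [Fin.mk_lt_mk]; omega)
      simp only [List.get_eq_getElem] at h1
      omega
    · have : j = k := by omega
      subst this
      omega

lemma rank_posList {X : List α} {c : α} {k : ℕ} (hk : k < (posList X c).length) :
    rank X c ((posList X c)[k] + 1) = k + 1 := by
  have hlt : (posList X c)[k] < X.length :=
    (mem_posList.1 (List.getElem_mem hk)).1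
  rw [rank_eq_length (by omega), filter_lt_sorted (posList_sorted X c) hk, List.length_take]
  omega

lemma select_rank {X : List α} {c : α} {i : ℕ} (h1 : 1 ≤ i) (h2 : i ≤ X.length)
    (hc : X.getD (i - 1) default = c) :
    select X c (rank X c i) = i ∧ 1 ≤ rank X c i ∧ rank X c i ≤ X.count c := by
  have hmem : (i - 1) ∈ posList X c := mem_posList.2 ⟨by omega, hc⟩
  obtain ⟨k, hk, hpk⟩ := List.mem_iff_getElem.1 hmem
  have hi : i = (posList X c)[k] + 1 := by omega
  have hr : rank X c i = k + 1 := by rw [hi]; exact rank_posList hk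
  refine ⟨?_, by omega, by rw [hr, ← posList_length X c]; omega⟩
  rw [hr, select_posList, List.getD_eq_getElem _ _ hk, ← hi]

lemma rank_select {X : List α} {c : α} {j : ℕ} (h1 : 1 ≤ j) (h2 : j ≤ X.count c) :
    rank X c (select X c j) = j ∧ 1 ≤ select X c j ∧ select X c j ≤ X.length ∧
      X.getD (select X c j - 1) default = c := by
  have hk : j - 1 < (posList X c).length := by rw [posList_length]; omega
  have hsel : select X c j = (posList X c)[j - 1] + 1 := by
    conv_lhs => rw [show j = (j - 1) + 1 by omega]
    rw [select_posList, List.getD_eq_getElem _ _ hk]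
  have hmem := mem_posList.1 (List.getElem_mem hk)
  refine ⟨?_, by omega, by omega, ?_⟩
  · rw [hsel, rank_posList hk]; omega
  · rw [hsel]; simpa using hmem.2

end Helpers

/-- The LF mapping (1-based): `LF(i) := select_F(S[i], rank_S(S[i], i))`. -/
def LFmap {α : Type*} [LinearOrder α] [Inhabited α] (S F : List α) (i : ℕ) : ℕ :=
  select F (S.getD (i - 1) default) (rank S (S.getD (i - 1) default) i)

/-- The FL mapping (1-based): `FL(i) := select_S(F[i], rank_F(F[i], i))`. -/
def FLmap {α : Type*} [LinearOrder α] [Inhabited α] (S F : List α) (i : ℕ) : ℕ :=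
  select S (F.getD (i - 1) default) (rank F (F.getD (i - 1) default) i)

lemma LF_half {α : Type*} [LinearOrder α] [Inhabited α]
    (S F : List α) (hperm : F.Perm S) :
    ∀ i, 1 ≤ i → i ≤ S.length →
      1 ≤ LFmap S F i ∧ LFmap S F i ≤ F.length ∧ FLmap S F (LFmap S F i) = i := by
  intro i h1 h2
  set c := S.getD (i - 1) default with hc
  obtain ⟨hsel, hr1, hr2⟩ := select_rank h1 h2 hc.symm
  have hcount : F.count c = S.count c := hperm.count_eq c
  obtain ⟨hrsel, hs1, hs2, hs3⟩ :=
    rank_select (X := F) (c := c) hr1 (by rw [hcount]; exact hr2)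
  have hLF : LFmap S F i = select F c (rank S c i) := rfl
  refine ⟨by rw [hLF]; exact hs1, by rw [hLF]; exact hs2, ?_⟩
  rw [hLF, FLmap, hs3, hrsel]
  exact hsel

/-- For a string `S` of length `n` and its non-decreasing sorted
rearrangement `F`, the maps `LF` and `FL` are well-defined permutations of `[1..n]`
and are mutually inverse. -/
theorem LF_FL_mutually_inverse {α : Type*} [LinearOrder α] [Inhabited α]
    (S F : List α) (hperm : F.Perm S) (hsorted : F.Pairwise (· ≤ ·)) :
    ∀ i, 1 ≤ i → i ≤ S.length →
      (1 ≤ LFmap S F i ∧ LFmap S F i ≤ S.length ∧ FLmap S F (LFmap S F i) = i) ∧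
      (1 ≤ FLmap S F i ∧ FLmap S F i ≤ S.length ∧ LFmap S F (FLmap S F i) = i) := by
  intro i h1 h2
  have hlen : F.length = S.length := hperm.length_eq
  obtain ⟨A1, A2, A3⟩ := LF_half S F hperm i h1 h2
  obtain ⟨B1, B2, B3⟩ := LF_half F S hperm.symm i h1 (by omega)
  exact ⟨⟨A1, by omega, A3⟩, ⟨B1, B2, B3⟩⟩
end

section
/- Let T be a string, let $ be a character strictly smaller than every character of T, let T' := T$ with n' := |T'|, let SA be the suffix array of T', and let BWT be the Burrows–Wheeler transform of T'. Define LF(i) := C[BWT[i]] + rank_{BWT}(BWT[i], i), where C[c] is the number of positions j with BWT[j] < c and rank_{BWT}(c, i) counts occurrences of c in BWT[1..i]. Then the LF mapping performs a backward step in the text: for every i ∈ [1..n'] with SA[i] > 1, SA[LF(i)] = SA[i] − 1, and if SA[i] = 1 then LF(i) = 1 and SA[LF(i)] = n'. -/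
namespace LFAux

lemma countP_or_disjoint {β : Type*} (L : List β) (A B : β → Bool)
    (h : ∀ a ∈ L, ¬(A a = true ∧ B a = true)) :
    L.countP (fun a => A a || B a) = L.countP A + L.countP B := by
  induction L with
  | nil => simp
  | cons x xs ih =>
    have hx := h x (by simp)
    have ihs := ih (fun a ha => h a (List.mem_cons_of_mem _ ha))
    simp only [List.countP_cons, ihs]
    cases hA : A x <;> cases hB : B x <;> simp_all <;> omega

lemma countP_lt_of_pairwise {β : Type*} (R : β → β → Prop) [DecidableRel R] (L : List β)
    (hL : L.Pairwise R) (hasym : ∀ a b, R a b → ¬ R b a)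
    (k : ℕ) (hk : k < L.length) :
    L.countP (fun a => decide (R a L[k])) = k := by
  have hpw := List.pairwise_iff_getElem.1 hL
  have htk : (L.take k).length = k := by simp [List.length_take]; omega
  have hRk : ∀ j (h : j < L.length), j < k → R L[j] L[k] := fun j h hj => hpw _ _ _ _ hj
  have hRk' : ∀ j (h : j < L.length), k < j → R L[k] L[j] := fun j h hj => hpw _ _ _ _ hj
  have hirr : ¬ R L[k] L[k] := fun h => hasym _ _ h h
  generalize hx : L[k] = x
  rw [hx] at hRk hRk' hirr
  conv_lhs => rw [← List.take_append_drop k L]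
  rw [List.countP_append]
  have h1 : (L.take k).countP (fun a => decide (R a x)) = k := by
    have := List.countP_eq_length (l := L.take k) (p := fun a => decide (R a x))
    rw [htk] at this
    rw [this]
    intro a ha
    obtain ⟨j, hj, rfl⟩ := List.mem_iff_getElem.1 ha
    rw [List.getElem_take]
    simp only [decide_eq_true_eq]
    exact hRk _ _ (by omega)
  have h2 : (L.drop k).countP (fun a => decide (R a x)) = 0 := by
    rw [List.countP_eq_zero]
    intro a ha
    obtain ⟨j, hj, rfl⟩ := List.mem_iff_getElem.1 ha
    rw [List.getElem_drop]
    simp only [decide_eq_true_eq]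
    rcases Nat.eq_zero_or_pos j with hj0 | hj0
    · subst hj0
      simp only [Nat.add_zero]
      intro h; rw [hx] at h; exact hirr h
    · have hlt : k < k + j := by omega
      have hjl : k + j < L.length := by simp at hj; omega
      have := hRk' (k + j) hjl hlt
      exact hasym _ _ this
  omega

lemma getD_countP {β : Type*} (R : β → β → Prop) [DecidableRel R] (L : List β)
    (hL : L.Pairwise R) (hasym : ∀ a b, R a b → ¬ R b a)
    (p : β) (hp : p ∈ L) (d : β) :
    L.getD (L.countP (fun a => decide (R a p))) d = p := by
  obtain ⟨m, hm, rfl⟩ := List.mem_iff_getElem.1 hp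
  rw [countP_lt_of_pairwise R L hL hasym m hm, List.getD_eq_getElem _ _ hm]

lemma getD_countP' {β : Type*} (R : β → β → Prop) [DecidableRel R] (L : List β)
    (hL : L.Pairwise R) (hasym : ∀ a b, R a b → ¬ R b a)
    (p : β) (hp : p ∈ L) (d : β) (f : β → Bool)
    (hf : ∀ a, f a = true ↔ R a p) (N : ℕ) (hN : L.countP f = N) :
    L.getD N d = p := by
  have hcg : L.countP f = L.countP (fun a => decide (R a p)) :=
    List.countP_congr (fun a _ => by simp [hf])
  rw [← hN, hcg]
  exact getD_countP R L hL hasym p hp d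

lemma lex_cons_iff {α : Type*} [LinearOrder α] {a b : α} {s t : List α} :
    List.Lex (· < ·) (a :: s) (b :: t) ↔ a < b ∨ (a = b ∧ List.Lex (· < ·) s t) := by
  constructor
  · intro h
    cases h with
    | rel h => exact Or.inl h
    | cons h => exact Or.inr ⟨rfl, h⟩
  · rintro (h | ⟨rfl, h⟩)
    · exact List.Lex.rel h
    · exact List.Lex.cons h

lemma lex_asymm {α : Type*} [LinearOrder α] {s t : List α}
    (h : List.Lex (· < ·) s t) : ¬ List.Lex (· < ·) t s := by
  have h1 : s < t := h
  have h2 := lt_asymm h1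
  exact fun h' => h2 h'

end LFAux
/-- Let `T' = T$` where `$ = c` is strictly smaller than every character
of `T`, let `SA` be the suffix array of `T'` (1-based) and `BWT` its Burrows–Wheeler
transform.  With `LF(i) := C[BWT[i]] + rank_BWT(BWT[i], i)`, the LF mapping performs a
backward step: if `SA[i] > 1` then `SA[LF(i)] = SA[i] − 1`, and if `SA[i] = 1` then
`LF(i) = 1` and `SA[LF(i)] = n'`. -/
theorem LF_backward_step {α : Type*} [LinearOrder α] [Inhabited α]
    (T : List α) (c : α) (hc : ∀ a ∈ T, c < a)
    (T' : List α) (hT' : T' = T ++ [c])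
    (n' : ℕ) (hn' : n' = T'.length)
    (SA : List ℕ)
    (hSAperm : SA.Perm (List.range' 1 n'))
    (hSAsorted : SA.Pairwise
      (fun a b => List.Lex (· < ·) (T'.drop (a - 1)) (T'.drop (b - 1))))
    (BWT : List α) (hBWTlen : BWT.length = n')
    (hBWT : ∀ i, 1 ≤ i → i ≤ n' →
      BWT.getD (i - 1) default =
        if 1 < SA.getD (i - 1) 0 then T'.getD (SA.getD (i - 1) 0 - 2) default else c)
    (LF : ℕ → ℕ)
    (hLF : ∀ i, LF i =
      BWT.countP (fun x => x < BWT.getD (i - 1) default) +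
        rank BWT (BWT.getD (i - 1) default) i) :
    ∀ i, 1 ≤ i → i ≤ n' →
      (1 < SA.getD (i - 1) 0 → SA.getD (LF i - 1) 0 = SA.getD (i - 1) 0 - 1) ∧
      (SA.getD (i - 1) 0 = 1 → LF i = 1 ∧ SA.getD (LF i - 1) 0 = n') := by
  -- basic length facts
  have hTlen : T'.length = n' := hn'.symm
  have hSAlen : SA.length = n' := by rw [hSAperm.length_eq, List.length_range']
  have hTn : T.length = n' - 1 := by
    have : T'.length = T.length + 1 := by rw [hT']; simp
    omega
  -- character facts
  have hTchar : ∀ j : ℕ, j < n' - 1 → c < T'.getD j default := by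
    intro j hj
    have hjT : j < T.length := by omega
    have he : T'.getD j default = T[j] := by
      have h1 : j < (T ++ [c]).length := by simp; omega
      have h2 : T'.getD j default = (T ++ [c]).getD j default := by rw [hT']
      rw [h2, List.getD_eq_getElem _ _ h1]
      exact List.getElem_append_left hjT
    rw [he]; exact hc _ (List.getElem_mem hjT)
  have hlastc : T'.getD (n' - 1) default = c := by
    have h2 : T'.getD (n' - 1) default = (T ++ [c]).getD (n' - 1) default := by rw [hT']
    rw [h2, List.getD_append_right _ _ _ _ (by omega)]
    have h3 : n' - 1 - T.length = 0 := by omega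
    rw [h3]; rfl
  -- the "first column" function
  set h : ℕ → α := fun q => if 1 < q then T'.getD (q - 2) default else c with hh
  have hBWTmap : BWT = SA.map h := by
    apply List.ext_getElem (by simp [hBWTlen, hSAlen])
    intro j hj1 hj2
    have hj : j < n' := by rwa [hBWTlen] at hj1
    have hjS : j < SA.length := by omega
    have hB := hBWT (j + 1) (by omega) (by omega)
    simp only [Nat.add_sub_cancel] at hB
    rw [← List.getD_eq_getElem BWT default hj1, hB, List.getElem_map,
        List.getD_eq_getElem SA 0 hjS]
  have hhc : ∀ q, 1 ≤ q → q ≤ n' → c ≤ h q := by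
    intro q h1 h2
    show c ≤ if 1 < q then T'.getD (q - 2) default else c
    rcases Nat.lt_or_ge 1 q with hq | hq
    · rw [if_pos hq]
      rcases Nat.lt_or_ge (q - 2) (n' - 1) with h3 | h3
      · exact le_of_lt (hTchar _ h3)
      · have : q - 2 = n' - 1 := by omega
        rw [this, hlastc]
    · rw [if_neg (by omega)]
  -- suffix cons decomposition
  have hsufcons : ∀ q, 1 ≤ q → q ≤ n' →
      T'.drop (q - 1) = T'.getD (q - 1) default :: T'.drop q := by
    intro q h1 h2
    have hq : q - 1 < T'.length := by omega
    rw [List.drop_eq_getElem_cons hq, List.getD_eq_getElem _ _ hq,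
      show q - 1 + 1 = q from by omega]
  have hasym : ∀ a b : ℕ, List.Lex (· < ·) (T'.drop (a - 1)) (T'.drop (b - 1)) →
      ¬ List.Lex (· < ·) (T'.drop (b - 1)) (T'.drop (a - 1)) := fun a b => LFAux.lex_asymm
  have hpw := List.pairwise_iff_getElem.1 hSAsorted
  intro i hi1 hin
  have hn'pos : 0 < n' := lt_of_lt_of_le hi1 hin
  have hiS : i - 1 < SA.length := by omega
  have hsg : SA.getD (i - 1) 0 = SA[i - 1] := List.getD_eq_getElem _ _ hiS
  have hsmem : SA.getD (i - 1) 0 ∈ List.range' 1 n' := by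
    rw [hsg]; exact hSAperm.subset (List.getElem_mem hiS)
  rw [List.mem_range'_1] at hsmem
  have hB := hBWT i hi1 hin
  have hLFi := hLF i
  have hiB : i - 1 < BWT.length := by omega
  have h1b : h 1 = c := by
    show (if 1 < 1 then T'.getD (1 - 2) default else c) = c
    rw [if_neg (by omega)]
  set s := SA.getD (i - 1) 0 with hsdef
  set b := BWT.getD (i - 1) default with hbdef
  constructor
  · -- main case : 1 < s
    intro hs1
    have hbval : b = T'.getD (s - 2) default := by rw [hB, if_pos hs1]
    have h21 : s - 1 - 1 = s - 2 := by omega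
    have hsn : s ≤ n' := by omega
    have hcb : c < b := by rw [hbval]; exact hTchar _ (by omega)
    have hbc : h s = b := by
      show (if 1 < s then T'.getD (s - 2) default else c) = b
      rw [if_pos hs1, hbval]
    -- predicates
    set A : ℕ → Bool := fun q => decide (T'.getD (q - 1) default < b) with hA
    set B : ℕ → Bool := fun q => decide (T'.getD (q - 1) default = b) &&
      decide (List.Lex (· < ·) (T'.drop q) (T'.drop (s - 1))) with hBdef
    set F : ℕ → Bool := fun r => decide (h r = b) &&
      decide (List.Lex (· < ·) (T'.drop (r - 1)) (T'.drop (s - 1))) with hF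
    -- step 1 : split the master count
    have hstep1 : (List.range' 1 n').countP
        (fun q => decide (List.Lex (· < ·) (T'.drop (q - 1)) (T'.drop (s - 1 - 1)))) =
        (List.range' 1 n').countP A + (List.range' 1 n').countP B := by
      rw [← LFAux.countP_or_disjoint (List.range' 1 n') A B (by
        rintro a _ ⟨h1, h2⟩
        simp only [hA, hBdef, Bool.and_eq_true, decide_eq_true_eq] at h1 h2
        exact absurd h2.1 (ne_of_lt h1))]
      apply List.countP_congr
      intro q hq
      rw [List.mem_range'_1] at hq
      have e1 : T'.drop (q - 1) = T'.getD (q - 1) default :: T'.drop q :=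
        hsufcons q hq.1 (by omega)
      have e2 : T'.drop (s - 1 - 1) = b :: T'.drop (s - 1) := by
        have e2' := hsufcons (s - 1) (by omega) (by omega)
        rw [h21] at e2'
        rw [h21, e2', hbval]
      rw [e1, e2]
      simp only [hA, hBdef, Bool.or_eq_true, Bool.and_eq_true, decide_eq_true_eq]
      exact LFAux.lex_cons_iff

    -- step 2 : the first summand is C[b]
    have hstep2 : BWT.countP (fun x => decide (x < b)) = (List.range' 1 n').countP A := by
      rw [hBWTmap, List.countP_map, hSAperm.countP_eq]
      have hcomp : List.countP ((fun x => decide (x < b)) ∘ h) (List.range' 1 n') =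
          List.countP (fun q => decide (h q < b)) (List.range' 1 n') :=
        List.countP_congr (fun x _ => by simp [Function.comp])
      rw [hcomp]
      have hL : List.range' 1 n' = List.range' 1 (n' - 1) ++ [n'] := by
        conv_lhs => rw [show n' = (n' - 1) + 1 from by omega]
        rw [List.range'_concat]
        congr 2
        omega
      have hR : List.range' 1 n' = 1 :: List.range' 2 (n' - 1) := by
        conv_lhs => rw [show n' = (n' - 1) + 1 from by omega, List.range'_succ]
      have hmap : List.range' 2 (n' - 1) = (List.range' 1 (n' - 1)).map (fun x => 1 + x) :=
        (List.map_add_range' (a := 1) 1 (n' - 1) 1).symm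
      have hAcount : List.countP A (List.range' 1 n') =
          List.countP A (List.range' 1 (n' - 1)) + 1 := by
        conv_lhs => rw [hL]
        rw [List.countP_append]
        have h1 : List.countP A [n'] = 1 := by
          simp only [List.countP_cons, List.countP_nil, hA, hlastc]
          simp [hcb]
        rw [h1]
      have hGcount : List.countP (fun q => decide (h q < b)) (List.range' 1 n') =
          List.countP A (List.range' 1 (n' - 1)) + 1 := by
        conv_lhs => rw [hR]
        rw [List.countP_cons, hmap, List.countP_map]
        have e : List.countP ((fun q => decide (h q < b)) ∘ (fun x => 1 + x))
            (List.range' 1 (n' - 1)) = List.countP A (List.range' 1 (n' - 1)) := by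
          apply List.countP_congr
          intro q hq
          rw [List.mem_range'_1] at hq
          simp only [Function.comp, hA, decide_eq_true_eq]
          have e1 : h (1 + q) = T'.getD (q - 1) default := by
            show (if 1 < 1 + q then T'.getD (1 + q - 2) default else c) = _
            rw [if_pos (by omega), show 1 + q - 2 = q - 1 from by omega]
          rw [e1]
        rw [e, h1b]
        simp [hcb]
      rw [hGcount, hAcount]
    -- step 3 : the second summand is rank b (i-1)
    have hstep3 : (List.range' 1 n').countP B = (BWT.take (i - 1)).count b := by
      have hhn : h (n' + 1) = c := by
        show (if 1 < n' + 1 then T'.getD (n' + 1 - 2) default else c) = c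
        rw [if_pos (by omega), show n' + 1 - 2 = n' - 1 from by omega, hlastc]
      have hF1 : F 1 = false := by
        simp only [hF, h1b]
        simp [ne_of_lt hcb]
      have hFn : F (n' + 1) = false := by
        simp only [hF, hhn]
        simp [ne_of_lt hcb]
      have hBF : List.countP B (List.range' 1 n') = List.countP F (List.range' 2 n') := by
        have hmap2 : List.range' 2 n' = (List.range' 1 n').map (fun x => 1 + x) :=
          (List.map_add_range' (a := 1) 1 n' 1).symm
        rw [hmap2, List.countP_map]
        apply List.countP_congr
        intro q hq
        rw [List.mem_range'_1] at hq
        simp only [hBdef, hF, Function.comp, Bool.and_eq_true, decide_eq_true_eq]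
        have e1 : h (1 + q) = T'.getD (q - 1) default := by
          show (if 1 < 1 + q then T'.getD (1 + q - 2) default else c) = _
          rw [if_pos (by omega), show 1 + q - 2 = q - 1 from by omega]
        rw [e1, show 1 + q - 1 = q from by omega]
      have hc1 : List.countP F (List.range' 1 (n' + 1)) = List.countP F (List.range' 2 n') := by
        rw [List.range'_succ, List.countP_cons, hF1]
        simp
      have hc2 : List.countP F (List.range' 1 (n' + 1)) = List.countP F (List.range' 1 n') := by
        rw [List.range'_concat, List.countP_append,
          show 1 + 1 * n' = n' + 1 from by omega]
        simp [List.countP_cons, hFn]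
      have hSAc : List.countP F SA = List.countP F (SA.take (i - 1)) := by
        conv_lhs => rw [← List.take_append_drop (i - 1) SA]
        rw [List.countP_append]
        have hdrop : List.countP F (SA.drop (i - 1)) = 0 := by
          rw [List.countP_eq_zero]
          intro a ha
          obtain ⟨j, hj, rfl⟩ := List.mem_iff_getElem.1 ha
          rw [List.getElem_drop]
          simp only [hF, Bool.and_eq_true, decide_eq_true_eq]
          rintro ⟨-, hlex⟩
          rw [hsg] at hlex
          rcases Nat.eq_zero_or_pos j with rfl | hj0
          · exact hasym _ _ hlex hlex
          · have hjl : i - 1 + j < SA.length := by simp at hj; omega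
            have hth := hpw (i - 1) (i - 1 + j) hiS hjl (by omega)
            exact hasym _ _ hth hlex
        rw [hdrop]
        omega
      have htake : List.countP F (SA.take (i - 1)) = (BWT.take (i - 1)).count b := by
        have hbt : BWT.take (i - 1) = (SA.take (i - 1)).map h := by
          rw [hBWTmap, List.map_take]
        rw [hbt, List.count_eq_countP, List.countP_map]
        apply List.countP_congr
        intro a ha
        obtain ⟨j, hj, rfl⟩ := List.mem_iff_getElem.1 ha
        have hjlen : j < i - 1 := by simp [List.length_take] at hj; omega
        rw [List.getElem_take]
        simp only [hF, Function.comp, Bool.and_eq_true, decide_eq_true_eq, beq_iff_eq]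
        constructor
        · rintro ⟨h1, -⟩; exact h1
        · intro h1
          refine ⟨h1, ?_⟩
          rw [hsg]
          exact hpw j (i - 1) (by omega) hiS (by omega)
      rw [hBF, ← hc1, hc2, ← hSAperm.countP_eq, hSAc, htake]
    -- rank increment
    have hbget : BWT[i - 1] = b := (List.getD_eq_getElem BWT default hiB).symm
    have hrank : rank BWT b i = (BWT.take (i - 1)).count b + 1 := by
      show (BWT.take i).count b = _
      have hti : BWT.take i = BWT.take (i - 1) ++ [b] := by
        conv_lhs => rw [show i = (i - 1) + 1 from by omega]
        rw [List.take_succ, List.getElem?_eq_getElem hiB, hbget]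
        rfl
      rw [hti, List.count_append]
      simp
    -- the master count
    have hcount : SA.countP (fun a => decide
        (List.Lex (· < ·) (T'.drop (a - 1)) (T'.drop (s - 1 - 1)))) = LF i - 1 := by
      rw [hSAperm.countP_eq, hstep1, ← hstep2, hstep3, hLFi, hrank]
      omega
    have hpmem : s - 1 ∈ SA := by
      rw [hSAperm.mem_iff, List.mem_range'_1]
      omega
    exact LFAux.getD_countP'
      (fun a b : ℕ => List.Lex (· < ·) (T'.drop (a - 1)) (T'.drop (b - 1)))
      SA hSAsorted hasym (s - 1) hpmem 0 _ (fun a => by simp) (LF i - 1) hcount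
  · -- terminal case : s = 1
    intro hs1
    have hbc2 : b = c := by
      rw [hB, hs1, if_neg (by omega)]
    have hC : BWT.countP (fun x => decide (x < b)) = 0 := by
      rw [List.countP_eq_zero]
      intro x hx
      rw [hBWTmap] at hx
      obtain ⟨q, hq, rfl⟩ := List.mem_map.1 hx
      rw [hSAperm.mem_iff, List.mem_range'_1] at hq
      simp only [decide_eq_true_eq]
      rw [hbc2]
      exact fun hlt => absurd hlt (not_lt.2 (hhc q hq.1 (by omega)))
    have hcount1 : BWT.count c = 1 := by
      rw [hBWTmap, List.count_eq_countP, List.countP_map, hSAperm.countP_eq]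
      rw [show n' = (n' - 1) + 1 from by omega, List.range'_succ, List.countP_cons]
      have hz : List.countP ((fun x => x == c) ∘ h) (List.range' 2 (n' - 1)) = 0 := by
        rw [List.countP_eq_zero]
        intro q hq
        rw [List.mem_range'_1] at hq
        have hcq := hTchar (q - 2) (by omega)
        have e : h q = T'.getD (q - 2) default := by
          show (if 1 < q then T'.getD (q - 2) default else c) = _
          rw [if_pos (by omega)]
        simp only [Function.comp, e, beq_iff_eq]
        exact ne_of_gt hcq
      rw [hz]
      simp [h1b]
    have hbget : BWT[i - 1] = c := by
      rw [← List.getD_eq_getElem BWT default hiB, ← hbdef, hbc2]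
    have hrank1 : rank BWT c i = 1 := by
      have hle : (BWT.take i).count c ≤ BWT.count c := (List.take_sublist i BWT).count_le c
      have hge : 0 < (BWT.take i).count c := by
        rw [List.count_pos_iff]
        refine List.mem_iff_getElem.2 ⟨i - 1, ?_, ?_⟩
        · simp [List.length_take]; omega
        · rw [List.getElem_take]; exact hbget
      show (BWT.take i).count c = 1
      omega
    have hLF1 : LF i = 1 := by
      rw [hLFi, hC, hbc2, hrank1]
    refine ⟨hLF1, ?_⟩
    have hnmem : n' ∈ SA := by
      rw [hSAperm.mem_iff, List.mem_range'_1]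
      omega
    have e2 : T'.drop (n' - 1) = [c] := by
      rw [hT', show n' - 1 = T.length from by omega]
      exact List.drop_left
    have hzero : SA.countP (fun a => decide
        (List.Lex (· < ·) (T'.drop (a - 1)) (T'.drop (n' - 1)))) = 0 := by
      rw [List.countP_eq_zero]
      intro q hq
      rw [hSAperm.mem_iff, List.mem_range'_1] at hq
      simp only [decide_eq_true_eq]
      intro hlex
      rcases Nat.lt_or_ge q n' with hqn | hqn
      · have e1 : T'.drop (q - 1) = T'.getD (q - 1) default :: T'.drop q :=
          hsufcons q hq.1 (by omega)
        rw [e1, e2] at hlex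
        have hcq : c < T'.getD (q - 1) default := hTchar _ (by omega)
        rcases LFAux.lex_cons_iff.1 hlex with h1 | ⟨h1, h2⟩
        · exact absurd h1 (not_lt.2 (le_of_lt hcq))
        · exact absurd h1.symm (ne_of_lt hcq)
      · have hq' : q = n' := by omega
        rw [hq'] at hlex
        exact hasym _ _ hlex hlex
    rw [hLF1]
    show SA.getD 0 0 = n'
    exact LFAux.getD_countP'
      (fun a b : ℕ => List.Lex (· < ·) (T'.drop (a - 1)) (T'.drop (b - 1)))
      SA hSAsorted hasym n' hnmem 0 _ (fun a => by simp) 0 hzero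
end

section
/- If T is a Lyndon word, then its bijective Burrows–Wheeler transform coincides with its BWTC: BBWT of T equals BWTC of T. -/
section Aux

variable {α : Type*} [LinearOrder α]

/-- If `s` is lex-less than `t` and not a prefix of it, the strictness survives
arbitrary appends. -/
lemma lex_append_of_not_prefix :
    ∀ {s t : List α}, List.Lex (· < ·) s t → ¬ s <+: t →
      ∀ x y, List.Lex (· < ·) (s ++ x) (t ++ y)
  | _, _, List.Lex.nil, hp, _, _ => absurd (List.nil_prefix) hp
  | _, _, List.Lex.cons h, hp, x, y => by
      refine List.Lex.cons (lex_append_of_not_prefix h ?_ x y)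
      intro hpre
      exact hp (List.cons_prefix_cons.mpr ⟨rfl, hpre⟩)
  | _, _, List.Lex.rel h, _, _, _ => List.Lex.rel h

lemma lex_append_self : ∀ (s l : List α), l ≠ [] → List.Lex (· < ·) s (s ++ l)
  | [], [], hl => absurd rfl hl
  | [], _ :: _, _ => List.Lex.nil
  | _ :: s, l, hl => List.Lex.cons (lex_append_self s l hl)

lemma lex_of_lex_append_left :
    ∀ (s : List α) {r u : List α}, List.Lex (· < ·) (s ++ r) (s ++ u) → List.Lex (· < ·) r u
  | [], _, _, h => h
  | _ :: s, r, u, h => by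
      cases h with
      | cons h => exact lex_of_lex_append_left s h
      | rel h => exact absurd h (lt_irrefl _)

/-- A Lyndon word is lexicographically smaller than each of its proper suffixes. -/
lemma lyndon_lex_drop {T : List α} (hT : IsLyndon T) {i : ℕ}
    (h0 : 0 < i) (hi : i < T.length) : List.Lex (· < ·) T (T.drop i) := by
  set s := T.drop i with hs
  set u := T.take i with hu
  have hlens : s.length = T.length - i := by simp [hs]
  have hlenu : u.length = i := by simp [hu]; omega
  have hrot : T.rotate i = s ++ u := List.rotate_eq_drop_append_take hi.le
  have h : List.Lex (· < ·) T (s ++ u) := hrot ▸ hT.2 i h0 hi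
  by_contra hns
  have hsT : ¬ (s = T) := by
    intro he
    have := congrArg List.length he
    omega
  have hlex : List.Lex (· < ·) s T := by
    rcases lt_trichotomy (s : List α) T with h1 | h1 | h1
    · exact h1
    · exact absurd h1 hsT
    · exact absurd h1 hns
  by_cases hp : s <+: T
  · obtain ⟨r, hr⟩ := hp
    have hru : List.Lex (· < ·) r u := by
      apply lex_of_lex_append_left s
      rw [hr]; exact h
    have hlenr : r.length = i := by
      have := congrArg List.length hr
      simp at this; omega
    have hnp : ¬ r <+: u := by
      intro hpre
      have : r = u := hpre.eq_of_length (by omega)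
      rw [this] at hru
      exact lt_irrefl (u : List α) hru
    have hkey : List.Lex (· < ·) (r ++ s) (u ++ s) :=
      lex_append_of_not_prefix hru hnp s s
    have hspos : 0 < s.length := by omega
    have hslt : s.length < T.length := by omega
    have hrot2 : T.rotate s.length = r ++ s := by
      rw [List.rotate_eq_drop_append_take hslt.le]
      conv_lhs => rw [← hr]
      rw [List.drop_left, List.take_left]
    have h2 : List.Lex (· < ·) T (r ++ s) := hrot2 ▸ hT.2 s.length hspos hslt
    have hT2 : T = u ++ s := (List.take_append_drop i T).symm
    have h2' : (u ++ s : List α) < (r ++ s) := by rw [← hT2]; exact h2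
    exact (lt_asymm h2') hkey
  · have := lex_append_of_not_prefix hlex hp u []
    rw [List.append_nil] at this
    exact (lt_asymm (show (s ++ u : List α) < T from this)) (show (T : List α) < s ++ u from h)

/-- The Lyndon factorization of a Lyndon word consists of the word alone. -/
lemma lyndon_factorization_eq {T : List α} (hT : IsLyndon T)
    {fs : List (List α)} (hfs : IsLyndonFactorization fs T) : fs = [T] := by
  obtain ⟨hflat, hly, hchain⟩ := hfs
  match fs, hflat with
  | [], hflat => exact absurd hflat.symm hT.1
  | [f], hflat => simp at hflat; rw [hflat]
  | f :: g :: rest, hflat =>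
    exfalso
    set tl : List (List α) := g :: rest with htl
    have htlne : tl ≠ [] := by simp [htl]
    set ft := tl.getLast htlne with hft
    have hfne : f ≠ [] := (hly f (by simp)).1
    have hftmem : ft ∈ tl := List.getLast_mem htlne
    have hftly : IsLyndon ft := hly ft (List.mem_cons_of_mem f hftmem)
    have hftne : ft ≠ [] := hftly.1
    -- pairwise from chain'
    haveI : IsTrans (List α) (fun a b => ¬ List.Lex (· < ·) a b) := by
      constructor
      intro a b c hab hbc hac
      exact hab (lt_of_lt_of_le (hac : a < c) (not_lt.mp hbc : c ≤ b))
    have hpw := List.isChain_iff_pairwise.mp hchain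
    have hrel : ¬ List.Lex (· < ·) f ft :=
      (List.pairwise_cons.mp hpw).1 ft hftmem
    -- f is a proper prefix of T
    have hflat' : f ++ tl.flatten = T := by
      rw [← hflat]; simp [htl]
    have htlflatne : tl.flatten ≠ [] := by
      simp only [htl, List.flatten_cons]
      exact fun he => (hly g (by simp [htl])).1 (List.append_eq_nil_iff.mp he).1
    have hfT : List.Lex (· < ·) f T := by
      rw [← hflat']
      exact lex_append_self f tl.flatten htlflatne
    -- ft is a proper suffix of T
    have h1 : tl = tl.dropLast ++ [ft] := (List.dropLast_append_getLast htlne).symm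
    have hTeq : T = (f ++ tl.dropLast.flatten) ++ ft := by
      rw [← hflat']
      conv_lhs => rw [h1]
      rw [List.flatten_append, List.flatten_cons, List.flatten_nil, List.append_nil,
        List.append_assoc]
    set w : List α := f ++ tl.dropLast.flatten with hw
    have hwpos : 0 < w.length := by
      rw [hw]
      simp only [List.length_append]
      have : 0 < f.length := List.length_pos_iff.mpr hfne
      omega
    have hwlt : w.length < T.length := by
      have := congrArg List.length hTeq
      simp only [List.length_append] at this
      have : 0 < ft.length := List.length_pos_iff.mpr hftne
      omega
    have hdrop : T.drop w.length = ft := by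
      rw [hTeq]; exact List.drop_left (l₁ := w) (l₂ := ft)
    have hTft : List.Lex (· < ·) T ft := by
      rw [← hdrop]
      exact lyndon_lex_drop hT hwpos hwlt
    exact hrel (show (f : List α) < ft from
      lt_trans (show (f : List α) < T from hfT) (show (T : List α) < ft from hTft))

end Aux

section Omega

variable {α : Type*} [LinearOrder α] [Inhabited α]

lemma lex_of_getD :
    ∀ (k : ℕ) (S T : List α), k < S.length → k < T.length →
      (∀ j < k, S.getD j default = T.getD j default) →
      S.getD k default < T.getD k default → List.Lex (· < ·) S T
  | 0, a :: S, b :: T, _, _, _, hlt => List.Lex.rel (by simpa using hlt)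
  | k + 1, a :: S, b :: T, hS, hT, hagree, hlt => by
      have hab : a = b := by simpa using hagree 0 (Nat.succ_pos k)
      subst hab
      refine List.Lex.cons (lex_of_getD k S T (by simpa using hS) (by simpa using hT) ?_ ?_)
      · intro j hj
        simpa using hagree (j + 1) (by omega)
      · simpa using hlt

lemma le_of_omegaLe {S T : List α} (hS : S ≠ [])
    (hlen : S.length = T.length) (h : OmegaLe S T) : S ≤ T := by
  have hpos : 0 < S.length := List.length_pos_iff.mpr hS
  rcases h with ⟨k, hagree, hlt⟩ | heq
  · -- OmegaLt: first difference must occur before S.length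
    have hmm : ∀ m : ℕ, m % S.length % S.length = m % S.length :=
      fun m => Nat.mod_mod_of_dvd m (dvd_refl S.length)
    have hk : k < S.length := by
      by_contra hkge
      push_neg at hkge
      have hmod : k % S.length < S.length := Nat.mod_lt _ hpos
      have hagr := hagree (k % S.length) (lt_of_lt_of_le hmod hkge)
      simp only [omegaWord, hmm, ← hlen, hmm] at hagr hlt
      exact lt_irrefl _ (hagr ▸ hlt)
    have hkT : k < T.length := hlen ▸ hk
    refine le_of_lt (show List.Lex (· < ·) S T from lex_of_getD k S T hk hkT ?_ ?_)
    · intro j hj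
      have := hagree j hj
      simpa only [omegaWord, Nat.mod_eq_of_lt (hj.trans hk),
        Nat.mod_eq_of_lt (hj.trans hkT)] using this
    · simpa only [omegaWord, Nat.mod_eq_of_lt hk, Nat.mod_eq_of_lt hkT] using hlt
  · -- equal omega words means equal lists
    have : S = T := by
      apply List.ext_get hlen
      intro i hi hi'
      have hcf := congrFun heq i
      simp only [omegaWord, Nat.mod_eq_of_lt hi, Nat.mod_eq_of_lt hi'] at hcf
      rw [← List.getD_eq_get S default ⟨i, hi⟩, ← List.getD_eq_get T default ⟨i, hi'⟩]
      exact hcf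
    exact this.le

end Omega

/-- If `T` is a Lyndon word, then its bijective Burrows–Wheeler
transform coincides with its BWTC: the last characters of the ≼_ω-sorted list of all
conjugates of all Lyndon factors of `T` equal the last characters of the ≼_lex-sorted
list of all conjugates of `T`. -/
theorem bbwt_eq_bwtc_of_lyndon {α : Type*} [LinearOrder α] [Inhabited α]
    (T : List α) (hT : IsLyndon T)
    (fs : List (List α)) (hfs : IsLyndonFactorization fs T)
    (L : List (List α))
    (hL : L.Perm (fs.flatMap conjugates)) (hLsorted : L.Pairwise OmegaLe)
    (L' : List (List α))
    (hL' : L'.Perm (conjugates T)) (hL'sorted : L'.Pairwise LexLe) :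
    L.map (fun s => s.getLastI) = L'.map (fun s => s.getLastI) := by
  have hfsT : fs = [T] := lyndon_factorization_eq hT hfs
  subst hfsT
  have hLc : L.Perm (conjugates T) := by simpa using hL
  have hperm : L.Perm L' := hLc.trans hL'.symm
  have hmemlen : ∀ s ∈ conjugates T, s.length = T.length ∧ s ≠ [] := by
    intro s hs
    simp only [conjugates, List.mem_map, List.mem_range] at hs
    obtain ⟨i, _, rfl⟩ := hs
    exact ⟨List.length_rotate T i, fun he => hT.1 (List.rotate_eq_nil_iff.mp he)⟩
  have hs1 : L.Pairwise (· ≤ ·) := by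
    refine hLsorted.imp_of_mem ?_
    intro a b ha hb hab
    obtain ⟨hal, hane⟩ := hmemlen a (hLc.subset ha)
    obtain ⟨hbl, _⟩ := hmemlen b (hLc.subset hb)
    exact le_of_omegaLe hane (hal.trans hbl.symm) hab
  have hs2 : L'.Pairwise (· ≤ ·) := by
    refine hL'sorted.imp ?_
    intro a b hab
    rcases hab with rfl | h
    · exact le_refl a
    · exact le_of_lt h
  rw [List.Perm.eq_of_pairwise' hs1 hs2 hperm]
end
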